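/- arXiv:0901.4193 — 3 statements merged into one kernel-verified Lean document; each statement's English description precedes it below -/
import Mathlib

section
/- Let H be a Hopf *-algebra acting on an inner product right A-module E compatibly with the inner product, i.e., g ▷ ⟨x,y⟩ = ⟨S(g₍₁₎)* ▷ x, g₍₂₎ ▷ y⟩, where H also acts on A as a *-action. Then the module structure is H-compatible: g ▷ (x·a) = (g₍₁₎ ▷ x)·(g₍₂₎ ▷ a) for all g ∈ H, x ∈ E, a ∈ A. -/
set_option maxHeartbeats 1000000


variable {C : Type*} [CommRing C] [StarRing C]
variable {H : Type*} [Ring H] [HopfAlgebra C H] [StarRing H] [StarModule C H]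
variable {A : Type*} [Ring A] [StarRing A] [Algebra C A] [StarModule C A]

open TensorProduct in
/-- `SwRep g g1 g2` states that `Δ(g) = ∑ i, g1 i ⊗ g2 i`, i.e. `(g1, g2)` is a Sweedler
representation of the comultiplication of `g`. -/
def SwRep {C : Type*} [CommRing C] {H : Type*} [Ring H] [HopfAlgebra C H]
    (g : H) {n : ℕ} (g1 g2 : Fin n → H) : Prop :=
  Coalgebra.comul (R := C) g = ∑ i, g1 i ⊗ₜ[C] g2 i

/-- `H` is a Hopf `*`-algebra: comultiplication and counit are `*`-homomorphisms. -/
def IsHopfStar (C H : Type*) [CommRing C] [StarRing C] [Ring H] [HopfAlgebra C H]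
    [StarRing H] [StarModule C H] : Prop :=
  (∀ g : H, Coalgebra.counit (R := C) (star g) = star (Coalgebra.counit (R := C) g)) ∧
  (∀ (g : H) (n : ℕ) (g1 g2 : Fin n → H), SwRep (C := C) g g1 g2 →
      SwRep (C := C) (star g) (fun i => star (g1 i)) (fun i => star (g2 i)))

/-- A left `*`-action of the Hopf `*`-algebra `H` on the `*`-algebra `A`:
`g ▷ (ab) = (g₍₁₎ ▷ a)(g₍₂₎ ▷ b)`, `g ▷ 1 = ε(g)1`, `(g ▷ a)* = S(g)* ▷ a*`. -/
structure StarAction (C H A : Type*) [CommRing C] [StarRing C] [Ring H] [HopfAlgebra C H]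
    [StarRing H] [StarModule C H] [Ring A] [StarRing A] [Algebra C A] [StarModule C A] where
  act : H →ₗ[C] A →ₗ[C] A
  act_one : ∀ a : A, act 1 a = a
  act_mul : ∀ (g h : H) (a : A), act (g * h) a = act g (act h a)
  act_ab : ∀ (g : H) (a b : A) (n : ℕ) (g1 g2 : Fin n → H), SwRep (C := C) g g1 g2 →
      act g (a * b) = ∑ i, act (g1 i) a * act (g2 i) b
  act_unit : ∀ g : H, act g 1 = Coalgebra.counit (R := C) g • (1 : A)
  act_star : ∀ (g : H) (a : A), star (act g a) =
      act (star (HopfAlgebra.antipode (R := C) g)) (star a)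

/-- An inner product right `A`-module: a right `A`-module with a nondegenerate
`A`-valued Hermitian inner product, `C`-linear and `A`-linear in the second argument. -/
structure IPModule (C A : Type*) [CommRing C] [StarRing C] [Ring A] [StarRing A]
    [Algebra C A] [StarModule C A] (E : Type*) [AddCommGroup E] [Module C E] where
  smulr : E → A → E
  smulr_add : ∀ (x : E) (a b : A), smulr x (a + b) = smulr x a + smulr x b
  add_smulr : ∀ (x y : E) (a : A), smulr (x + y) a = smulr x a + smulr y a
  smulr_mul : ∀ (x : E) (a b : A), smulr x (a * b) = smulr (smulr x a) b
  smulr_one : ∀ x : E, smulr x 1 = x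
  smulr_csmul : ∀ (c : C) (x : E) (a : A), smulr (c • x) a = c • smulr x a
  smulr_cact : ∀ (c : C) (x : E) (a : A), smulr x (c • a) = c • smulr x a
  inner : E → E → A
  inner_add_right : ∀ x y z : E, inner x (y + z) = inner x y + inner x z
  inner_smul_right : ∀ (c : C) (x y : E), inner x (c • y) = c • inner x y
  inner_conj : ∀ x y : E, inner x y = star (inner y x)
  inner_smulr : ∀ (x y : E) (a : A), inner x (smulr y a) = inner x y * a
  inner_nondeg : ∀ x : E, (∀ y : E, inner x y = 0) → x = 0

/-- `S` is an adjoint of `T`: `⟨x', T x⟩ = ⟨S x', x⟩` for all `x`, `x'`. -/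
def IsAdjoint {C A : Type*} [CommRing C] [StarRing C] [Ring A] [StarRing A]
    [Algebra C A] [StarModule C A] {E E' : Type*} [AddCommGroup E] [Module C E]
    [AddCommGroup E'] [Module C E'] (e : IPModule C A E) (e' : IPModule C A E')
    (T : E → E') (S : E' → E) : Prop :=
  ∀ (x' : E') (x : E), e'.inner x' (T x) = e.inner (S x') x

/-- `T` is adjointable: some adjoint exists. -/
def Adjointable {C A : Type*} [CommRing C] [StarRing C] [Ring A] [StarRing A]
    [Algebra C A] [StarModule C A] {E E' : Type*} [AddCommGroup E] [Module C E]
    [AddCommGroup E'] [Module C E'] (e : IPModule C A E) (e' : IPModule C A E')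
    (T : E → E') : Prop :=
  ∃ S : E' → E, IsAdjoint e e' T S

section CovariantHelpers

open TensorProduct

/-- Every element of `H ⊗ H` admits a finite Sweedler-type representation. -/
private lemma exists_fin_rep {C : Type*} [CommRing C] {H : Type*} [AddCommGroup H]
    [Module C H] (t : H ⊗[C] H) :
    ∃ (n : ℕ) (u v : Fin n → H), t = ∑ i, u i ⊗ₜ[C] v i := by
  induction t with
  | zero => exact ⟨0, ![], ![], by simp⟩
  | tmul x y => exact ⟨1, ![x], ![y], by simp⟩
  | add t1 t2 h1 h2 =>
    obtain ⟨n, u, v, rfl⟩ := h1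
    obtain ⟨m, u', v', rfl⟩ := h2
    refine ⟨n + m, Fin.append u u', Fin.append v v', ?_⟩
    rw [Fin.sum_univ_add]
    simp [Fin.append_left, Fin.append_right]

/-- Lift a trilinear function to the triple tensor product. -/
private noncomputable def triLift {C : Type*} [CommRing C] {H : Type*} [AddCommGroup H] [Module C H]
    {M : Type*} [AddCommGroup M] [Module C M] (f : H → H → H → M)
    (hpa : ∀ p p' q r, f (p + p') q r = f p q r + f p' q r)
    (hps : ∀ (c : C) p q r, f (c • p) q r = c • f p q r)
    (hqa : ∀ p q q' r, f p (q + q') r = f p q r + f p q' r)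
    (hqs : ∀ (c : C) p q r, f p (c • q) r = c • f p q r)
    (hra : ∀ p q r r', f p q (r + r') = f p q r + f p q r')
    (hrs : ∀ (c : C) p q r, f p q (c • r) = c • f p q r) :
    H ⊗[C] (H ⊗[C] H) →ₗ[C] M :=
  TensorProduct.lift
    { toFun := fun p => TensorProduct.lift
        (LinearMap.mk₂ C (f p) (hqa p) (fun c q r => hqs c p q r) (hra p)
          (fun c q r => hrs c p q r))
      map_add' := fun p p' => by
        apply TensorProduct.ext'
        intro q r
        simp [hpa]
      map_smul' := fun c p => by
        apply TensorProduct.ext'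
        intro q r
        simp [hps] }

@[simp] private lemma triLift_tmul {C : Type*} [CommRing C] {H : Type*} [AddCommGroup H]
    [Module C H] {M : Type*} [AddCommGroup M] [Module C M] (f : H → H → H → M)
    (hpa hps hqa hqs hra hrs) (p q r : H) :
    triLift f hpa hps hqa hqs hra hrs (p ⊗ₜ[C] (q ⊗ₜ[C] r)) = f p q r := by
  simp [triLift]

variable {C : Type*} [CommRing C] [StarRing C]
variable {H : Type*} [Ring H] [HopfAlgebra C H] [StarRing H] [StarModule C H]
variable {A : Type*} [Ring A] [StarRing A] [Algebra C A] [StarModule C A]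
variable {E : Type*} [AddCommGroup E] [Module C E]

private lemma eip_inner_smul_left (e : IPModule C A E) (c : C) (x y : E) :
    e.inner (c • x) y = star c • e.inner x y := by
  rw [e.inner_conj, e.inner_smul_right, star_smul, ← e.inner_conj]

private lemma eip_inner_add_left (e : IPModule C A E) (x x' y : E) :
    e.inner (x + x') y = e.inner x y + e.inner x' y := by
  rw [e.inner_conj, e.inner_add_right, star_add, ← e.inner_conj, ← e.inner_conj]

private lemma eip_inner_sum_left (e : IPModule C A E) {n : ℕ} (f : Fin n → E) (y : E) :
    e.inner (∑ i, f i) y = ∑ i, e.inner (f i) y :=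
  map_sum (AddMonoidHom.mk' (fun x => e.inner x y) (fun a b => eip_inner_add_left e a b y)) f
    Finset.univ

private lemma eip_inner_sum_right (e : IPModule C A E) {n : ℕ} (x : E) (f : Fin n → E) :
    e.inner x (∑ i, f i) = ∑ i, e.inner x (f i) :=
  map_sum (AddMonoidHom.mk' (e.inner x) (e.inner_add_right x)) f Finset.univ

private lemma eip_inner_sub_right (e : IPModule C A E) (x y z : E) :
    e.inner x (y - z) = e.inner x y - e.inner x z := by
  have hneg : e.inner x (-z) = -e.inner x z := by
    have := e.inner_smul_right (-1 : C) x z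
    simpa [neg_smul, one_smul] using this
  rw [sub_eq_add_neg, e.inner_add_right, hneg, sub_eq_add_neg]

/-- The coassociativity identity in terms of finite Sweedler representations. -/
private lemma coassoc_reps (h : H) {m : ℕ} (h1 h2 : Fin m → H)
    (hrep : Coalgebra.comul (R := C) h = ∑ i, h1 i ⊗ₜ[C] h2 i)
    {mp : Fin m → ℕ} (p q : ∀ i, Fin (mp i) → H)
    (hpq : ∀ i, Coalgebra.comul (R := C) (h1 i) = ∑ j, p i j ⊗ₜ[C] q i j)
    {mr : Fin m → ℕ} (r s : ∀ i, Fin (mr i) → H)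
    (hrs : ∀ i, Coalgebra.comul (R := C) (h2 i) = ∑ k, r i k ⊗ₜ[C] s i k) :
    (∑ i, ∑ j, p i j ⊗ₜ[C] (q i j ⊗ₜ[C] h2 i)) =
      ∑ i, ∑ k, h1 i ⊗ₜ[C] (r i k ⊗ₜ[C] s i k) := by
  have hco := Coalgebra.coassoc_apply (R := C) h
  rw [hrep] at hco
  calc ∑ i, ∑ j, p i j ⊗ₜ[C] (q i j ⊗ₜ[C] h2 i)
      = TensorProduct.assoc C H H H
          ((Coalgebra.comul (R := C)).rTensor H (∑ i, h1 i ⊗ₜ[C] h2 i)) := by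
        rw [map_sum, map_sum]
        refine (Finset.sum_congr rfl fun i _ => ?_).symm
        rw [LinearMap.rTensor_tmul, hpq i, sum_tmul, map_sum]
        exact Finset.sum_congr rfl fun j _ => by rw [assoc_tmul]
    _ = (Coalgebra.comul (R := C)).lTensor H (∑ i, h1 i ⊗ₜ[C] h2 i) := hco
    _ = ∑ i, ∑ k, h1 i ⊗ₜ[C] (r i k ⊗ₜ[C] s i k) := by
        rw [map_sum]
        refine Finset.sum_congr rfl fun i _ => ?_
        rw [LinearMap.lTensor_tmul, hrs i, tmul_sum]

/-- `∑ ε(h₍₁₎) • h₍₂₎ = h` for any finite Sweedler representation. -/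
private lemma counit_rep (h : H) {m : ℕ} (h1 h2 : Fin m → H)
    (hrep : Coalgebra.comul (R := C) h = ∑ i, h1 i ⊗ₜ[C] h2 i) :
    ∑ i, Coalgebra.counit (R := C) (h1 i) • h2 i = h := by
  have h0 := Coalgebra.rTensor_counit_comul (R := C) h
  rw [hrep, map_sum] at h0
  have h1' := congrArg (TensorProduct.lid C H) h0
  simpa [map_sum] using h1'

/-- `∑ h₍₁₎ S(h₍₂₎) = ε(h) • 1` for any finite Sweedler representation. -/
private lemma mul_antipode_rep (h : H) {m : ℕ} (h1 h2 : Fin m → H)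
    (hrep : Coalgebra.comul (R := C) h = ∑ i, h1 i ⊗ₜ[C] h2 i) :
    ∑ i, h1 i * HopfAlgebra.antipode (R := C) (h2 i)
      = Coalgebra.counit (R := C) h • (1 : H) := by
  have h0 := HopfAlgebra.mul_antipode_lTensor_comul_apply (R := C) h
  rw [hrep, map_sum, map_sum] at h0
  rw [Algebra.algebraMap_eq_smul_one] at h0
  simpa [LinearMap.mul'_apply] using h0

/-- Key computation: `⟨η, g ▷ v⟩ = ∑ g₍₂₎ ▷ ⟨(g₍₁₎)* ▷ η, v⟩`. -/
private lemma key_inner (α : StarAction C H A) (e : IPModule C A E)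
    (ρ : H →ₗ[C] E →ₗ[C] E)
    (ρ_one : ∀ x : E, ρ 1 x = x)
    (ρ_mul : ∀ (g h : H) (x : E), ρ (g * h) x = ρ g (ρ h x))
    (ρ_inner : ∀ (g : H) (x y : E) (n : ℕ) (g1 g2 : Fin n → H), SwRep (C := C) g g1 g2 →
        α.act g (e.inner x y) =
          ∑ i, e.inner (ρ (star (HopfAlgebra.antipode (R := C) (g1 i))) x) (ρ (g2 i) y))
    (h : H) {m : ℕ} (h1 h2 : Fin m → H)
    (hrep : Coalgebra.comul (R := C) h = ∑ i, h1 i ⊗ₜ[C] h2 i) (η v : E) :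
    e.inner η (ρ h v) = ∑ i, α.act (h2 i) (e.inner (ρ (star (h1 i)) η) v) := by
  classical
  choose mp p q hpq using fun i => exists_fin_rep (Coalgebra.comul (R := C) (h1 i))
  choose mr r s hrs using fun i => exists_fin_rep (Coalgebra.comul (R := C) (h2 i))
  have E1 := coassoc_reps h h1 h2 hrep p q hpq r s hrs
  set F : H → H → H → A := fun pp qq rr =>
    e.inner (ρ (star (HopfAlgebra.antipode (R := C) qq) * star pp) η) (ρ rr v) with hF
  have hpa : ∀ pp pp' qq rr, F (pp + pp') qq rr = F pp qq rr + F pp' qq rr := by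
    intro pp pp' qq rr
    simp only [hF, star_add, mul_add, map_add, LinearMap.add_apply]
    rw [eip_inner_add_left]
  have hps : ∀ (c : C) pp qq rr, F (c • pp) qq rr = c • F pp qq rr := by
    intro c pp qq rr
    simp only [hF, star_smul, mul_smul_comm, map_smul, LinearMap.smul_apply]
    rw [eip_inner_smul_left, star_star]
  have hqa : ∀ pp qq qq' rr, F pp (qq + qq') rr = F pp qq rr + F pp qq' rr := by
    intro pp qq qq' rr
    simp only [hF, map_add, star_add, add_mul, LinearMap.add_apply]
    rw [eip_inner_add_left]
  have hqs : ∀ (c : C) pp qq rr, F pp (c • qq) rr = c • F pp qq rr := by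
    intro c pp qq rr
    simp only [hF, map_smul, star_smul, smul_mul_assoc, LinearMap.smul_apply]
    rw [eip_inner_smul_left, star_star]
  have hra : ∀ pp qq rr rr', F pp qq (rr + rr') = F pp qq rr + F pp qq rr' := by
    intro pp qq rr rr'
    simp only [hF, map_add, LinearMap.add_apply]
    rw [e.inner_add_right]
  have hrs' : ∀ (c : C) pp qq rr, F pp qq (c • rr) = c • F pp qq rr := by
    intro c pp qq rr
    simp only [hF, map_smul, LinearMap.smul_apply]
    rw [e.inner_smul_right]
  have hE : ∑ i, ∑ j, F (p i j) (q i j) (h2 i) = ∑ i, ∑ k, F (h1 i) (r i k) (s i k) := by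
    have h0 := congrArg (triLift F hpa hps hqa hqs hra hrs') E1
    simp only [map_sum, triLift_tmul] at h0
    exact h0
  have hL : ∀ i, ∑ j, F (p i j) (q i j) (h2 i)
      = Coalgebra.counit (R := C) (h1 i) • e.inner η (ρ (h2 i) v) := by
    intro i
    have hsum : ∑ j, star (HopfAlgebra.antipode (R := C) (q i j)) * star (p i j)
        = star (Coalgebra.counit (R := C) (h1 i)) • (1 : H) := by
      calc ∑ j, star (HopfAlgebra.antipode (R := C) (q i j)) * star (p i j)
          = star (∑ j, p i j * HopfAlgebra.antipode (R := C) (q i j)) := by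
            rw [star_sum]
            exact Finset.sum_congr rfl fun j _ => (star_mul _ _).symm
        _ = star (Coalgebra.counit (R := C) (h1 i)) • (1 : H) := by
            rw [mul_antipode_rep (h1 i) (p i) (q i) (hpq i), star_smul, star_one]
    calc ∑ j, F (p i j) (q i j) (h2 i)
        = e.inner (ρ (∑ j, star (HopfAlgebra.antipode (R := C) (q i j)) * star (p i j)) η)
            (ρ (h2 i) v) := by
          rw [map_sum, LinearMap.sum_apply, eip_inner_sum_left]
      _ = Coalgebra.counit (R := C) (h1 i) • e.inner η (ρ (h2 i) v) := by
          rw [hsum, map_smul, LinearMap.smul_apply, ρ_one, eip_inner_smul_left, star_star]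
  have hR : ∀ i, ∑ k, F (h1 i) (r i k) (s i k)
      = α.act (h2 i) (e.inner (ρ (star (h1 i)) η) v) := by
    intro i
    rw [ρ_inner (h2 i) (ρ (star (h1 i)) η) v (mr i) (r i) (s i) (hrs i)]
    refine Finset.sum_congr rfl fun k _ => ?_
    simp only [hF]
    rw [ρ_mul]
  calc e.inner η (ρ h v)
      = e.inner η (ρ (∑ i, Coalgebra.counit (R := C) (h1 i) • h2 i) v) := by
        rw [counit_rep h h1 h2 hrep]
    _ = ∑ i, Coalgebra.counit (R := C) (h1 i) • e.inner η (ρ (h2 i) v) := by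
        rw [map_sum, LinearMap.sum_apply, eip_inner_sum_right]
        exact Finset.sum_congr rfl fun i _ => by
          rw [map_smul, LinearMap.smul_apply, e.inner_smul_right]
    _ = ∑ i, ∑ j, F (p i j) (q i j) (h2 i) := by
        exact (Finset.sum_congr rfl fun i _ => hL i).symm
    _ = ∑ i, ∑ k, F (h1 i) (r i k) (s i k) := hE
    _ = ∑ i, α.act (h2 i) (e.inner (ρ (star (h1 i)) η) v) :=
        Finset.sum_congr rfl fun i _ => hR i

end CovariantHelpers

/-- If a Hopf `*`-algebra `H` acts on an inner product right `A`-module `E` compatibly with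
the inner product, `g ▷ ⟨x,y⟩ = ⟨S(g₍₁₎)* ▷ x, g₍₂₎ ▷ y⟩`, then the module structure is
`H`-compatible: `g ▷ (x·a) = (g₍₁₎ ▷ x)·(g₍₂₎ ▷ a)`. -/
theorem covariant_module_structure {E : Type*} [AddCommGroup E] [Module C E]
    (hH : IsHopfStar C H) (α : StarAction C H A) (e : IPModule C A E)
    (ρ : H →ₗ[C] E →ₗ[C] E)
    (ρ_one : ∀ x : E, ρ 1 x = x)
    (ρ_mul : ∀ (g h : H) (x : E), ρ (g * h) x = ρ g (ρ h x))
    (ρ_inner : ∀ (g : H) (x y : E) (n : ℕ) (g1 g2 : Fin n → H), SwRep (C := C) g g1 g2 →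
        α.act g (e.inner x y) =
          ∑ i, e.inner (ρ (star (HopfAlgebra.antipode (R := C) (g1 i))) x) (ρ (g2 i) y)) :
    ∀ (g : H) (x : E) (a : A) (n : ℕ) (g1 g2 : Fin n → H), SwRep (C := C) g g1 g2 →
      ρ g (e.smulr x a) = ∑ i, e.smulr (ρ (g1 i) x) (α.act (g2 i) a) := by
  intro g x a n g1 g2 hrep
  classical
  have hrep' : Coalgebra.comul (R := C) g = ∑ i, g1 i ⊗ₜ[C] g2 i := hrep
  choose mp p q hpq using fun i => exists_fin_rep (Coalgebra.comul (R := C) (g1 i))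
  choose mr r s hrs using fun i => exists_fin_rep (Coalgebra.comul (R := C) (g2 i))
  have E1 := coassoc_reps g g1 g2 hrep' p q hpq r s hrs
  have main : ∀ η : E, e.inner η (ρ g (e.smulr x a)) =
      e.inner η (∑ i, e.smulr (ρ (g1 i) x) (α.act (g2 i) a)) := by
    intro η
    set G : H → H → H → A := fun pp qq rr =>
      α.act qq (e.inner (ρ (star pp) η) x) * α.act rr a with hG
    have hpa : ∀ pp pp' qq rr, G (pp + pp') qq rr = G pp qq rr + G pp' qq rr := by
      intro pp pp' qq rr
      simp only [hG, star_add, map_add, LinearMap.add_apply]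
      rw [eip_inner_add_left, map_add, add_mul]
    have hps : ∀ (c : C) pp qq rr, G (c • pp) qq rr = c • G pp qq rr := by
      intro c pp qq rr
      simp only [hG, star_smul, map_smul, LinearMap.smul_apply]
      rw [eip_inner_smul_left, star_star, map_smul, smul_mul_assoc]
    have hqa : ∀ pp qq qq' rr, G pp (qq + qq') rr = G pp qq rr + G pp qq' rr := by
      intro pp qq qq' rr
      simp only [hG, map_add, LinearMap.add_apply, add_mul]
    have hqs : ∀ (c : C) pp qq rr, G pp (c • qq) rr = c • G pp qq rr := by
      intro c pp qq rr
      simp only [hG, map_smul, LinearMap.smul_apply, smul_mul_assoc]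
    have hra : ∀ pp qq rr rr', G pp qq (rr + rr') = G pp qq rr + G pp qq rr' := by
      intro pp qq rr rr'
      simp only [hG, map_add, LinearMap.add_apply, mul_add]
    have hrs' : ∀ (c : C) pp qq rr, G pp qq (c • rr) = c • G pp qq rr := by
      intro c pp qq rr
      simp only [hG, map_smul, LinearMap.smul_apply, mul_smul_comm]
    have hE : ∑ i, ∑ j, G (p i j) (q i j) (g2 i) = ∑ i, ∑ k, G (g1 i) (r i k) (s i k) := by
      have h0 := congrArg (triLift G hpa hps hqa hqs hra hrs') E1
      simp only [map_sum, triLift_tmul] at h0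
      exact h0
    calc e.inner η (ρ g (e.smulr x a))
        = ∑ i, α.act (g2 i) (e.inner (ρ (star (g1 i)) η) (e.smulr x a)) :=
          key_inner α e ρ ρ_one ρ_mul ρ_inner g g1 g2 hrep' η _
      _ = ∑ i, α.act (g2 i) (e.inner (ρ (star (g1 i)) η) x * a) := by
          exact Finset.sum_congr rfl fun i _ => by rw [e.inner_smulr]
      _ = ∑ i, ∑ k, G (g1 i) (r i k) (s i k) := by
          exact Finset.sum_congr rfl fun i _ =>
            α.act_ab (g2 i) _ a (mr i) (r i) (s i) (hrs i)
      _ = ∑ i, ∑ j, G (p i j) (q i j) (g2 i) := hE.symm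
      _ = ∑ i, (∑ j, α.act (q i j) (e.inner (ρ (star (p i j)) η) x)) * α.act (g2 i) a := by
          exact Finset.sum_congr rfl fun i _ => by rw [Finset.sum_mul]
      _ = ∑ i, e.inner η (ρ (g1 i) x) * α.act (g2 i) a := by
          refine Finset.sum_congr rfl fun i _ => ?_
          rw [← key_inner α e ρ ρ_one ρ_mul ρ_inner (g1 i) (p i) (q i) (hpq i) η x]
      _ = ∑ i, e.inner η (e.smulr (ρ (g1 i) x) (α.act (g2 i) a)) := by
          exact Finset.sum_congr rfl fun i _ => (e.inner_smulr _ _ _).symm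
      _ = e.inner η (∑ i, e.smulr (ρ (g1 i) x) (α.act (g2 i) a)) :=
          (eip_inner_sum_right e η _).symm
  have hdiff : ∀ y : E, e.inner
      (ρ g (e.smulr x a) - ∑ i, e.smulr (ρ (g1 i) x) (α.act (g2 i) a)) y = 0 := by
    intro y
    rw [e.inner_conj, eip_inner_sub_right, main y, sub_self, star_zero]
  exact sub_eq_zero.mp (e.inner_nondeg _ hdiff)
end

section
/- Let H be a Hopf *-algebra acting on *-algebras A and B via *-actions that are both inner via momentum maps J_A: H → A and J_B: H → B. Let E be a (B,A)-bimodule. Then the formula g ▷ x = J_B(g₍₁₎)·x·J_A(S(g₍₂₎)) defines a left H-module structure on E satisfying g ▷ (b·x·a) = (g₍₁₎ ▷ b)·(g₍₂₎ ▷ x)·(g₍₃₎ ▷ a). -/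
variable {C : Type*} [CommRing C] [StarRing C]
variable {H : Type*} [Ring H] [HopfAlgebra C H] [StarRing H] [StarModule C H]
variable {A : Type*} [Ring A] [StarRing A] [Algebra C A] [StarModule C A]

variable {B : Type*} [Ring B] [StarRing B] [Algebra C B] [StarModule C B]

/-!
Let `φ = L ∘ J_B` and `ψ = R ∘ J_A ∘ S`, where `L` and `R` are the commuting algebra maps into
`End(E)` given by the two actions. Then `g ▷ ·` is the convolution `φ ⋆ ψ`, i.e. `μ ∘ (φ ⊗ ψ) ∘ Δ`,
which is an algebra map because `Δ` is one and `S` is an anti-homomorphism: this is the module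
structure. For the compatibility, the inner action on `B` is `(J_B · b) ⋆ (J_B ∘ S)` and
`(J_B ∘ S) ⋆ J_B = J_B ∘ (S ⋆ id) = 1`, so associativity of convolution gives
`(g₍₁₎ ▷ b) J_B(g₍₂₎) = J_B(g) b`, hence `g ▷ (b x) = (g₍₁₎ ▷ b)(g₍₂₎ ▷ x)`. The mirror identity
`J_A(S g₍₁₎)(g₍₂₎ ▷ a) = a J_A(S g)` gives `g ▷ (x a) = (g₍₁₎ ▷ x)(g₍₂₎ ▷ a)` in the same way.
-/

open TensorProduct HopfAlgebra WithConv
open scoped Coalgebra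

section Sweedler
variable {C : Type*} [CommRing C] {H : Type*} [Ring H] [HopfAlgebra C H]

theorem exists_swRep (g : H) : ∃ (n : ℕ) (g1 g2 : Fin n → H), SwRep (C := C) g g1 g2 := by
  obtain ⟨s, hs⟩ := TensorProduct.exists_finset (R := C) (Coalgebra.comul g)
  refine ⟨s.card, fun i => (s.equivFin.symm i : H × H).1,
    fun i => (s.equivFin.symm i : H × H).2, ?_⟩
  rw [SwRep, hs, ← Finset.sum_attach s (fun p => p.1 ⊗ₜ[C] p.2)]
  exact (Equiv.sum_comp s.equivFin.symm (fun p : s => (p : H × H).1 ⊗ₜ[C] (p : H × H).2)).symm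

theorem SwRep.convMul_apply {D : Type*} [Semiring D] [Algebra C D] {g : H} {n : ℕ}
    {g1 g2 : Fin n → H} (hg : SwRep (C := C) g g1 g2) (f k : WithConv (H →ₗ[C] D)) :
    (f * k) g = ∑ i, f (g1 i) * k (g2 i) :=
  Coalgebra.Repr.convMul_apply ⟨Finset.univ, g1, g2, hg.symm⟩ f k

end Sweedler

section Convolution
variable {C : Type*} [CommSemiring C] {H : Type*} [Semiring H] [HopfAlgebra C H]
  {D : Type*} [Semiring D] [Algebra C D]

theorem AlgHom.toConv_comp_antipode_mul_toConv (φ : H →ₐ[C] D) :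
    toConv (φ.toLinearMap ∘ₗ antipode C) * toConv φ.toLinearMap = 1 := by
  have := LinearMap.algHom_comp_convMul_distrib φ (toConv (antipode C)) (toConv LinearMap.id)
  rw [LinearMap.antipode_mul_id] at this
  ext h
  simpa using congr($this h).symm

theorem toConv_mulRight_comp_mul {d : D} (f g : H →ₗ[C] D) (hd : ∀ h, Commute d (g h)) :
    toConv (LinearMap.mulRight C d ∘ₗ f) * toConv g =
      toConv (LinearMap.mulRight C d ∘ₗ (toConv f * toConv g).ofConv) := by
  ext h
  simp [(ℛ C h).convMul_apply, mul_assoc, (hd _).eq]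

theorem toConv_mul_mulLeft_comp {d : D} (f g : H →ₗ[C] D) (hd : ∀ h, Commute d (f h)) :
    toConv f * toConv (LinearMap.mulLeft C d ∘ₗ g) =
      toConv (LinearMap.mulLeft C d ∘ₗ (toConv f * toConv g).ofConv) := by
  ext h
  simp [(ℛ C h).convMul_apply, ← mul_assoc, (hd _).eq]

end Convolution

section InnerAction
variable {C : Type*} [CommRing C] {H : Type*} [Ring H] [HopfAlgebra C H]
  {A : Type*} [Semiring A] [Algebra C A] {B : Type*} [Semiring B] [Algebra C B]
  {D : Type*} [Semiring D] [Algebra C D]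

def IsInnerAction (J : H →ₐ[C] A) (act : H →ₗ[C] A →ₗ[C] A) : Prop :=
  ∀ (g : H) (a : A) (n : ℕ) (g1 g2 : Fin n → H), SwRep (C := C) g g1 g2 →
    act g a = ∑ i, J (g1 i) * a * J (antipode C (g2 i))

theorem IsInnerAction.toConv_comp_flip_eq_mulRight_mul {J : H →ₐ[C] A}
    {act : H →ₗ[C] A →ₗ[C] A} (hJ : IsInnerAction J act) (F : A →ₐ[C] D) (a : A) :
    toConv (F.toLinearMap ∘ₗ act.flip a) =
      toConv (LinearMap.mulRight C (F a) ∘ₗ (F.comp J).toLinearMap) *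
        toConv ((F.comp J).toLinearMap ∘ₗ antipode C) := by
  ext h
  obtain ⟨n, g1, g2, hg⟩ := exists_swRep (C := C) h
  simp [hg.convMul_apply, hJ h a n g1 g2 hg, map_sum]

theorem IsInnerAction.toConv_comp_flip_eq_mul_mulLeft {J : H →ₐ[C] A}
    {act : H →ₗ[C] A →ₗ[C] A} (hJ : IsInnerAction J act) (F : A →ₐ[C] D) (a : A) :
    toConv (F.toLinearMap ∘ₗ act.flip a) =
      toConv (F.comp J).toLinearMap *
        toConv (LinearMap.mulLeft C (F a) ∘ₗ (F.comp J).toLinearMap ∘ₗ antipode C) := by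
  ext h
  obtain ⟨n, g1, g2, hg⟩ := exists_swRep (C := C) h
  simp [hg.convMul_apply, hJ h a n g1 g2 hg, map_sum, mul_assoc]

variable (L : B →ₐ[C] D) (R : A →ₐ[C] Dᵐᵒᵖ) (hLR : ∀ b a, Commute (L b) (R a).unop)
  (JB : H →ₐ[C] B) (JA : H →ₐ[C] A)

noncomputable def innerBimoduleAction : H →ₐ[C] D :=
  (Algebra.TensorProduct.lift (L.comp JB)
    ((AlgHom.opComm (R.comp JA)).comp (antipodeAlgHomOp C H)) fun _ _ => hLR _ _).comp
    (Bialgebra.comulAlgHom C H)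

theorem innerBimoduleAction_apply_of_swRep {g : H} {n : ℕ} {g1 g2 : Fin n → H}
    (hg : SwRep (C := C) g g1 g2) :
    innerBimoduleAction L R hLR JB JA g =
      ∑ i, L (JB (g1 i)) * (R (JA (antipode C (g2 i)))).unop := by
  rw [innerBimoduleAction, AlgHom.comp_apply, Bialgebra.comulAlgHom_apply, hg, map_sum]
  rfl

theorem toConv_innerBimoduleAction :
    toConv (innerBimoduleAction L R hLR JB JA).toLinearMap =
      toConv (L.comp JB).toLinearMap * toConv ((MulOpposite.opLinearEquiv C).symm.toLinearMap ∘ₗ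
        (R.comp JA).toLinearMap ∘ₗ antipode C) := by
  ext h
  obtain ⟨n, g1, g2, hg⟩ := exists_swRep (C := C) h
  simp [hg.convMul_apply, innerBimoduleAction_apply_of_swRep L R hLR JB JA hg]

theorem toConv_op_comp_innerBimoduleAction :
    toConv ((MulOpposite.opLinearEquiv C).toLinearMap ∘ₗ
        (innerBimoduleAction L R hLR JB JA).toLinearMap) =
      toConv ((MulOpposite.opLinearEquiv C).toLinearMap ∘ₗ (L.comp JB).toLinearMap) *
        toConv ((R.comp JA).toLinearMap ∘ₗ antipode C) := by
  ext h
  obtain ⟨n, g1, g2, hg⟩ := exists_swRep (C := C) h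
  simp only [LinearMap.coe_comp, LinearEquiv.coe_coe, MulOpposite.coe_opLinearEquiv,
    AlgHom.coe_toLinearMap, Function.comp_apply, AlgHom.comp_toLinearMap, hg.convMul_apply,
    innerBimoduleAction_apply_of_swRep L R hLR JB JA hg, Finset.op_sum, MulOpposite.op_mul,
    MulOpposite.op_unop]
  exact Finset.sum_congr rfl fun i _ => (hLR _ _).op.eq.symm

theorem innerBimoduleAction_mul_left {β : H →ₗ[C] B →ₗ[C] B} (hB : IsInnerAction JB β) (b : B)
    {g : H} {n : ℕ} {g1 g2 : Fin n → H} (hg : SwRep (C := C) g g1 g2) :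
    innerBimoduleAction L R hLR JB JA g * L b =
      ∑ i, L (β (g1 i) b) * innerBimoduleAction L R hLR JB JA (g2 i) := by
  have key : toConv (L.toLinearMap ∘ₗ β.flip b) *
      toConv (innerBimoduleAction L R hLR JB JA).toLinearMap =
      toConv (LinearMap.mulRight C (L b) ∘ₗ (innerBimoduleAction L R hLR JB JA).toLinearMap) := by
    rw [hB.toConv_comp_flip_eq_mulRight_mul, toConv_innerBimoduleAction, mul_assoc,
      ← mul_assoc (toConv (_ ∘ₗ antipode C)), AlgHom.toConv_comp_antipode_mul_toConv, one_mul,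
      toConv_mulRight_comp_mul _ _ fun h => hLR b _, ← toConv_innerBimoduleAction]
  simpa [hg.convMul_apply] using congr($key g).symm

theorem innerBimoduleAction_mul_right {α : H →ₗ[C] A →ₗ[C] A} (hA : IsInnerAction JA α) (a : A)
    {g : H} {n : ℕ} {g1 g2 : Fin n → H} (hg : SwRep (C := C) g g1 g2) :
    innerBimoduleAction L R hLR JB JA g * (R a).unop =
      ∑ i, (R (α (g2 i) a)).unop * innerBimoduleAction L R hLR JB JA (g1 i) := by
  -- `R` reverses products, so the convolution identity lives in `Dᵐᵒᵖ`.
  have key : toConv ((MulOpposite.opLinearEquiv C).toLinearMap ∘ₗ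
        (innerBimoduleAction L R hLR JB JA).toLinearMap) * toConv (R.toLinearMap ∘ₗ α.flip a) =
      toConv (LinearMap.mulLeft C (R a) ∘ₗ (MulOpposite.opLinearEquiv C).toLinearMap ∘ₗ
        (innerBimoduleAction L R hLR JB JA).toLinearMap) := by
    rw [hA.toConv_comp_flip_eq_mul_mulLeft, toConv_op_comp_innerBimoduleAction, mul_assoc,
      ← mul_assoc (toConv (_ ∘ₗ antipode C)), AlgHom.toConv_comp_antipode_mul_toConv, one_mul,
      toConv_mul_mulLeft_comp _ _ fun h => (hLR _ a).op.symm,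
      ← toConv_op_comp_innerBimoduleAction]
  apply MulOpposite.op_injective
  simpa [hg.convMul_apply] using congr($key g).symm

end InnerAction

section RawBimodule
variable {C : Type*} [CommSemiring C] {E : Type*} [AddCommMonoid E] [Module C E]

def leftActionAlgHom {B : Type*} [Semiring B] [Algebra C B] (smull : B → E → E)
    (smull_add : ∀ (b : B) (x y : E), smull b (x + y) = smull b x + smull b y)
    (add_smull : ∀ (b b' : B) (x : E), smull (b + b') x = smull b x + smull b' x)
    (smull_mul : ∀ (b b' : B) (x : E), smull (b * b') x = smull b (smull b' x))
    (smull_one : ∀ x : E, smull 1 x = x)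
    (smull_csmul : ∀ (c : C) (b : B) (x : E), smull (c • b) x = c • smull b x) :
    B →ₐ[C] Module.End C E :=
  AlgHom.ofLinearMap
    (LinearMap.mk₂ C smull add_smull smull_csmul smull_add fun c b x => by
      rw [← smull_one x, ← smull_csmul, ← smull_mul, mul_smul_comm, mul_one, smull_csmul,
        smull_one])
    (LinearMap.ext smull_one) fun b b' => LinearMap.ext (smull_mul b b')

def rightActionAlgHom {A : Type*} [Semiring A] [Algebra C A] (smulr : E → A → E)
    (smulr_add : ∀ (x : E) (a a' : A), smulr x (a + a') = smulr x a + smulr x a')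
    (add_smulr : ∀ (x y : E) (a : A), smulr (x + y) a = smulr x a + smulr y a)
    (smulr_mul : ∀ (x : E) (a a' : A), smulr x (a * a') = smulr (smulr x a) a')
    (smulr_one : ∀ x : E, smulr x 1 = x)
    (smulr_csmul : ∀ (c : C) (x : E) (a : A), smulr x (c • a) = c • smulr x a) :
    A →ₐ[C] (Module.End C E)ᵐᵒᵖ :=
  AlgHom.ofLinearMap
    ((MulOpposite.opLinearEquiv C).toLinearMap ∘ₗ
      LinearMap.mk₂ C (fun a x => smulr x a) (fun a a' x => smulr_add x a a')
        (fun c a x => smulr_csmul c x a) (fun a x y => add_smulr x y a) fun c a x => by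
          rw [← smulr_one x, ← smulr_csmul, ← smulr_mul, smul_mul_assoc, one_mul, smulr_csmul,
            smulr_one])
    (MulOpposite.unop_injective (LinearMap.ext smulr_one))
    fun a a' => MulOpposite.unop_injective (LinearMap.ext fun x => smulr_mul x a a')

end RawBimodule

theorem inner_actions_lift_to_bimodule_general
    (α : StarAction C H A) (β : StarAction C H B)
    (JA : H →ₐ[C] A)
    (hA : ∀ (g : H) (a : A) (n : ℕ) (g1 g2 : Fin n → H), SwRep (C := C) g g1 g2 →
        α.act g a = ∑ i, JA (g1 i) * a * JA (HopfAlgebra.antipode (R := C) (g2 i)))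
    (JB : H →ₐ[C] B)
    (hB : ∀ (g : H) (b : B) (n : ℕ) (g1 g2 : Fin n → H), SwRep (C := C) g g1 g2 →
        β.act g b = ∑ i, JB (g1 i) * b * JB (HopfAlgebra.antipode (R := C) (g2 i)))
    {E : Type*} [AddCommGroup E] [Module C E]
    (smull : B → E → E) (smulr : E → A → E)
    (smull_add : ∀ (b : B) (x y : E), smull b (x + y) = smull b x + smull b y)
    (add_smull : ∀ (b b' : B) (x : E), smull (b + b') x = smull b x + smull b' x)
    (smull_mul : ∀ (b b' : B) (x : E), smull (b * b') x = smull b (smull b' x))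
    (smull_one : ∀ x : E, smull 1 x = x)
    (smulr_add : ∀ (x : E) (a a' : A), smulr x (a + a') = smulr x a + smulr x a')
    (add_smulr : ∀ (x y : E) (a : A), smulr (x + y) a = smulr x a + smulr y a)
    (smulr_mul : ∀ (x : E) (a a' : A), smulr x (a * a') = smulr (smulr x a) a')
    (smulr_one : ∀ x : E, smulr x 1 = x)
    (bimod_assoc : ∀ (b : B) (x : E) (a : A), smull b (smulr x a) = smulr (smull b x) a)
    (smull_csmul : ∀ (c : C) (b : B) (x : E), smull (c • b) x = c • smull b x)
    (smulr_csmul : ∀ (c : C) (x : E) (a : A), smulr x (c • a) = c • smulr x a) :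
    ∃ actE : H → E → E,
      (∀ (g : H) (x : E) (n : ℕ) (g1 g2 : Fin n → H), SwRep (C := C) g g1 g2 →
          actE g x =
            ∑ i, smull (JB (g1 i)) (smulr x (JA (HopfAlgebra.antipode (R := C) (g2 i))))) ∧
      (∀ x : E, actE 1 x = x) ∧
      (∀ (g h : H) (x : E), actE (g * h) x = actE g (actE h x)) ∧
      (∀ (g : H) (b : B) (x : E) (a : A) (n : ℕ) (p q : Fin n → H),
          SwRep (C := C) g p q →
          ∀ (m : Fin n → ℕ) (p1 p2 : (i : Fin n) → Fin (m i) → H),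
            (∀ i, SwRep (C := C) (p i) (p1 i) (p2 i)) →
            actE g (smull b (smulr x a)) =
              ∑ i, ∑ j, smull (β.act (p1 i j) b)
                (smulr (actE (p2 i j) x) (α.act (q i) a))) := by
  let L := leftActionAlgHom (C := C) smull smull_add add_smull smull_mul smull_one smull_csmul
  let R := rightActionAlgHom (C := C) smulr smulr_add add_smulr smulr_mul smulr_one smulr_csmul
  have hLR : ∀ b a, Commute (L b) (R a).unop := fun b a =>
    LinearMap.ext fun x => bimod_assoc b x a
  let act := innerBimoduleAction L R hLR JB JA
  refine ⟨fun g x => act g x, fun g x n g1 g2 hg => ?_, fun x => by simp [act],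
    fun g h x => by simp [act], ?_⟩
  · simp only [act, innerBimoduleAction_apply_of_swRep L R hLR JB JA hg, LinearMap.sum_apply]
    rfl
  · intro g b x a n p q hg m p1 p2 hp
    calc act g (smull b (smulr x a))
        = (act g * (R a).unop) (L b x) := congrArg (act g) (bimod_assoc b x a)
      _ = ∑ i, (R (α.act (q i) a)).unop ((act (p i) * L b) x) := by
        simp only [act, innerBimoduleAction_mul_right L R hLR JB JA hA a hg, LinearMap.sum_apply]
        rfl
      _ = ∑ i, (R (α.act (q i) a)).unop (∑ j, (L (β.act (p1 i j) b) * act (p2 i j)) x) := by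
        simp only [act, innerBimoduleAction_mul_left L R hLR JB JA hB b (hp _),
          LinearMap.sum_apply]
      _ = _ := by
        simp only [map_sum]
        exact Finset.sum_congr rfl fun i _ => Finset.sum_congr rfl fun j _ =>
          (bimod_assoc _ _ _).symm

/-- If the `*`-actions of `H` on `A` and `B` are both inner via momentum maps `J_A`, `J_B`,
then `g ▷ x = J_B(g₍₁₎)·x·J_A(S(g₍₂₎))` defines a left `H`-module structure on any
`(B,A)`-bimodule `E` satisfying `g ▷ (b·x·a) = (g₍₁₎ ▷ b)·(g₍₂₎ ▷ x)·(g₍₃₎ ▷ a)`. -/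
theorem inner_actions_lift_to_bimodule (hH : IsHopfStar C H)
    (α : StarAction C H A) (β : StarAction C H B)
    (JA : H →ₐ[C] A) (JAstar : ∀ g : H, JA (star g) = star (JA g))
    (hA : ∀ (g : H) (a : A) (n : ℕ) (g1 g2 : Fin n → H), SwRep (C := C) g g1 g2 →
        α.act g a = ∑ i, JA (g1 i) * a * JA (HopfAlgebra.antipode (R := C) (g2 i)))
    (JB : H →ₐ[C] B) (JBstar : ∀ g : H, JB (star g) = star (JB g))
    (hB : ∀ (g : H) (b : B) (n : ℕ) (g1 g2 : Fin n → H), SwRep (C := C) g g1 g2 →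
        β.act g b = ∑ i, JB (g1 i) * b * JB (HopfAlgebra.antipode (R := C) (g2 i)))
    {E : Type*} [AddCommGroup E] [Module C E]
    (smull : B → E → E) (smulr : E → A → E)
    (smull_add : ∀ (b : B) (x y : E), smull b (x + y) = smull b x + smull b y)
    (add_smull : ∀ (b b' : B) (x : E), smull (b + b') x = smull b x + smull b' x)
    (smull_mul : ∀ (b b' : B) (x : E), smull (b * b') x = smull b (smull b' x))
    (smull_one : ∀ x : E, smull 1 x = x)
    (smulr_add : ∀ (x : E) (a a' : A), smulr x (a + a') = smulr x a + smulr x a')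
    (add_smulr : ∀ (x y : E) (a : A), smulr (x + y) a = smulr x a + smulr y a)
    (smulr_mul : ∀ (x : E) (a a' : A), smulr x (a * a') = smulr (smulr x a) a')
    (smulr_one : ∀ x : E, smulr x 1 = x)
    (bimod_assoc : ∀ (b : B) (x : E) (a : A), smull b (smulr x a) = smulr (smull b x) a)
    (smull_csmul : ∀ (c : C) (b : B) (x : E), smull (c • b) x = c • smull b x)
    (smulr_csmul : ∀ (c : C) (x : E) (a : A), smulr x (c • a) = c • smulr x a) :
    ∃ actE : H → E → E,
      (∀ (g : H) (x : E) (n : ℕ) (g1 g2 : Fin n → H), SwRep (C := C) g g1 g2 →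
          actE g x =
            ∑ i, smull (JB (g1 i)) (smulr x (JA (HopfAlgebra.antipode (R := C) (g2 i))))) ∧
      (∀ x : E, actE 1 x = x) ∧
      (∀ (g h : H) (x : E), actE (g * h) x = actE g (actE h x)) ∧
      (∀ (g : H) (b : B) (x : E) (a : A) (n : ℕ) (p q : Fin n → H),
          SwRep (C := C) g p q →
          ∀ (m : Fin n → ℕ) (p1 p2 : (i : Fin n) → Fin (m i) → H),
            (∀ i, SwRep (C := C) (p i) (p1 i) (p2 i)) →
            actE g (smull b (smulr x a)) =
              ∑ i, ∑ j, smull (β.act (p1 i j) b)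
                (smulr (actE (p2 i j) x) (α.act (q i) a))) :=
  inner_actions_lift_to_bimodule_general α β JA hA JB hB smull smulr smull_add add_smull smull_mul
    smull_one smulr_add add_smulr smulr_mul smulr_one bimod_assoc smull_csmul smulr_csmul
end

section
/- With H and A as above, the set U(H,A) of elements â ∈ GL(H,A) additionally satisfying â(g₍₁₎)(â(S(g₍₂₎)*))* = ε(g)1_A is a subgroup of GL(H,A). -/
variable {C : Type*} [CommRing C] [StarRing C]
variable {H : Type*} [Ring H] [HopfAlgebra C H] [StarRing H] [StarModule C H]
variable {A : Type*} [Ring A] [StarRing A] [Algebra C A] [StarModule C A]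

/-- The convolution product on `Hom_C(H,A)`: `(f * h)(g) = f(g₍₁₎)h(g₍₂₎)`. -/
noncomputable def conv (f h : H →ₗ[C] A) : H →ₗ[C] A :=
  (TensorProduct.lift ((LinearMap.mul C A).compl₁₂ f h)).comp (Coalgebra.comul)

/-- The convolution unit `ê(g) = ε(g)1_A`. -/
noncomputable def convUnit : H →ₗ[C] A := (Algebra.linearMap C A).comp (Coalgebra.counit)

/-- The set `GL(H,A)` of cocycles: `â(1)=1`, `â(gh) = â(g₍₁₎)(g₍₂₎ ▷ â(h))`, and
`(g₍₁₎ ▷ b)â(g₍₂₎) = â(g₍₁₎)(g₍₂₎ ▷ b)`. -/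
def GLset (α : StarAction C H A) : Set (H →ₗ[C] A) :=
  {f | f 1 = 1 ∧
    (∀ (g h : H) (n : ℕ) (g1 g2 : Fin n → H), SwRep (C := C) g g1 g2 →
        f (g * h) = ∑ i, f (g1 i) * α.act (g2 i) (f h)) ∧
    (∀ (g : H) (b : A) (n : ℕ) (g1 g2 : Fin n → H), SwRep (C := C) g g1 g2 →
        ∑ i, α.act (g1 i) b * f (g2 i) = ∑ i, f (g1 i) * α.act (g2 i) b)}

/-- The subset `U(H,A) ⊆ GL(H,A)` of unitary cocycles:
`â(g₍₁₎)(â(S(g₍₂₎)*))* = ε(g)1`. -/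
def Uset (α : StarAction C H A) : Set (H →ₗ[C] A) :=
  {f | f ∈ GLset α ∧
    ∀ (g : H) (n : ℕ) (g1 g2 : Fin n → H), SwRep (C := C) g g1 g2 →
      ∑ i, f (g1 i) * star (f (star (HopfAlgebra.antipode (R := C) (g2 i)))) =
        Coalgebra.counit (R := C) g • (1 : A)}


set_option linter.unusedSectionVars false
namespace HopfStarAux

open TensorProduct LinearMap Coalgebra HopfAlgebra

section Toolkit
variable {M : Type*} [AddCommGroup M] [Module C M]

lemma exists_swRep (g : H) : ∃ (n : ℕ) (g1 g2 : Fin n → H), SwRep (C := C) g g1 g2 := by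
  classical
  obtain ⟨s, hs⟩ := TensorProduct.exists_finset (R := C) (Coalgebra.comul (R := C) g)
  refine ⟨s.card, fun i => ((s.equivFin.symm i : H × H)).1,
         fun i => ((s.equivFin.symm i : H × H)).2, ?_⟩
  unfold SwRep
  rw [hs, ← Finset.sum_coe_sort s (fun p => (p : H × H).1 ⊗ₜ[C] (p : H × H).2)]
  exact (Equiv.sum_comp s.equivFin.symm
    (fun x : s => ((x : H × H).1 ⊗ₜ[C] (x : H × H).2))).symm

lemma swRep_apply {g : H} {n : ℕ} {g1 g2 : Fin n → H} (h : SwRep (C := C) g g1 g2)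
    (Φ : H ⊗[C] H →ₗ[C] M) : ∑ i, Φ (g1 i ⊗ₜ[C] g2 i) = Φ (Coalgebra.comul (R := C) g) := by
  rw [h, map_sum]

lemma swRep_counit_left {g : H} {n : ℕ} {g1 g2 : Fin n → H} (h : SwRep (C := C) g g1 g2) :
    ∑ i, Coalgebra.counit (R := C) (g1 i) • g2 i = g := by
  have := swRep_apply (M := H) h
    ((TensorProduct.lid C H).toLinearMap ∘ₗ (Coalgebra.counit (R := C) (A := H)).rTensor H)
  simpa using this

lemma swRep_counit_right {g : H} {n : ℕ} {g1 g2 : Fin n → H} (h : SwRep (C := C) g g1 g2) :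
    ∑ i, Coalgebra.counit (R := C) (g2 i) • g1 i = g := by
  have := swRep_apply (M := H) h
    ((TensorProduct.rid C H).toLinearMap ∘ₗ (Coalgebra.counit (R := C) (A := H)).lTensor H)
  simpa using this

lemma swRep_antipode_mul {g : H} {n : ℕ} {g1 g2 : Fin n → H} (h : SwRep (C := C) g g1 g2) :
    ∑ i, HopfAlgebra.antipode (R := C) (g1 i) * g2 i
      = Coalgebra.counit (R := C) g • (1 : H) := by
  have := swRep_apply (M := H) h
    ((LinearMap.mul' C H) ∘ₗ (HopfAlgebra.antipode (R := C) (A := H)).rTensor H)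
  simpa [Algebra.algebraMap_eq_smul_one] using this

lemma swRep_mul_antipode {g : H} {n : ℕ} {g1 g2 : Fin n → H} (h : SwRep (C := C) g g1 g2) :
    ∑ i, g1 i * HopfAlgebra.antipode (R := C) (g2 i)
      = Coalgebra.counit (R := C) g • (1 : H) := by
  have := swRep_apply (M := H) h
    ((LinearMap.mul' C H) ∘ₗ (HopfAlgebra.antipode (R := C) (A := H)).lTensor H)
  simpa [Algebra.algebraMap_eq_smul_one] using this

lemma comul_mul_repr {x y : H} {n m : ℕ} {x1 x2 : Fin n → H} {y1 y2 : Fin m → H}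
    (hx : SwRep (C := C) x x1 x2) (hy : SwRep (C := C) y y1 y2) :
    Coalgebra.comul (R := C) (x * y) = ∑ i, ∑ j, (x1 i * y1 j) ⊗ₜ[C] (x2 i * y2 j) := by
  rw [Bialgebra.comul_mul, hx, hy, Finset.sum_mul_sum]
  simp [Algebra.TensorProduct.tmul_mul_tmul]

lemma swRep_mul_antipode_mul {x y : H} {n m : ℕ} {x1 x2 : Fin n → H} {y1 y2 : Fin m → H}
    (hx : SwRep (C := C) x x1 x2) (hy : SwRep (C := C) y y1 y2) :
    ∑ i, ∑ j, HopfAlgebra.antipode (R := C) (x1 i * y1 j) * (x2 i * y2 j)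
      = Coalgebra.counit (R := C) (x * y) • (1 : H) := by
  have h0 := HopfAlgebra.mul_antipode_rTensor_comul_apply (R := C) (x * y)
  rw [comul_mul_repr hx hy] at h0
  simp only [map_sum, LinearMap.rTensor_tmul, LinearMap.mul'_apply] at h0
  simpa [Algebra.algebraMap_eq_smul_one] using h0

lemma swRep_coassoc (Φ : H ⊗[C] (H ⊗[C] H) →ₗ[C] M)
    {g : H} {n : ℕ} {g1 g2 : Fin n → H} (hg : SwRep (C := C) g g1 g2)
    {m₁ : Fin n → ℕ} {a₁ b₁ : ∀ i, Fin (m₁ i) → H}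
    (h₁ : ∀ i, SwRep (C := C) (g1 i) (a₁ i) (b₁ i))
    {m₂ : Fin n → ℕ} {a₂ b₂ : ∀ i, Fin (m₂ i) → H}
    (h₂ : ∀ i, SwRep (C := C) (g2 i) (a₂ i) (b₂ i)) :
    ∑ i, ∑ j, Φ (a₁ i j ⊗ₜ[C] (b₁ i j ⊗ₜ[C] g2 i))
      = ∑ i, ∑ j, Φ (g1 i ⊗ₜ[C] (a₂ i j ⊗ₜ[C] b₂ i j)) := by
  have hco := Coalgebra.coassoc_apply (R := C) g
  have e1 : (TensorProduct.assoc C H H H)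
      ((Coalgebra.comul (R := C) (A := H)).rTensor H (Coalgebra.comul (R := C) g))
      = ∑ i, ∑ j, a₁ i j ⊗ₜ[C] (b₁ i j ⊗ₜ[C] g2 i) := by
    rw [hg, map_sum, map_sum]
    refine Finset.sum_congr rfl fun i _ => ?_
    rw [LinearMap.rTensor_tmul, h₁ i, TensorProduct.sum_tmul, map_sum]
    simp
  have e2 : (Coalgebra.comul (R := C) (A := H)).lTensor H (Coalgebra.comul (R := C) g)
      = ∑ i, ∑ j, g1 i ⊗ₜ[C] (a₂ i j ⊗ₜ[C] b₂ i j) := by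
    rw [hg, map_sum]
    refine Finset.sum_congr rfl fun i _ => ?_
    rw [LinearMap.lTensor_tmul, h₂ i, TensorProduct.tmul_sum]
  calc ∑ i, ∑ j, Φ (a₁ i j ⊗ₜ[C] (b₁ i j ⊗ₜ[C] g2 i))
      = Φ ((TensorProduct.assoc C H H H)
          ((Coalgebra.comul (R := C) (A := H)).rTensor H (Coalgebra.comul (R := C) g))) := by
        rw [e1]; simp [map_sum]
    _ = Φ ((Coalgebra.comul (R := C) (A := H)).lTensor H (Coalgebra.comul (R := C) g)) := by
        rw [hco]
    _ = ∑ i, ∑ j, Φ (g1 i ⊗ₜ[C] (a₂ i j ⊗ₜ[C] b₂ i j)) := by rw [e2]; simp [map_sum]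

lemma sum4_comm {M : Type*} [AddCommMonoid M] {na nb : ℕ} {am : Fin na → ℕ} {bm : Fin nb → ℕ}
    (F : (i : Fin na) → Fin (am i) → (k : Fin nb) → Fin (bm k) → M) :
    ∑ i, ∑ j, ∑ k, ∑ l, F i j k l = ∑ k, ∑ l, ∑ i, ∑ j, F i j k l := by
  calc ∑ i, ∑ j, ∑ k, ∑ l, F i j k l
      = ∑ i, ∑ k, ∑ j, ∑ l, F i j k l :=
        Finset.sum_congr rfl fun i _ => Finset.sum_comm
    _ = ∑ i, ∑ k, ∑ l, ∑ j, F i j k l :=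
        Finset.sum_congr rfl fun i _ => Finset.sum_congr rfl fun k _ => Finset.sum_comm
    _ = ∑ k, ∑ i, ∑ l, ∑ j, F i j k l := Finset.sum_comm
    _ = ∑ k, ∑ l, ∑ i, ∑ j, F i j k l :=
        Finset.sum_congr rfl fun k _ => Finset.sum_comm

end Toolkit


section Conv
variable {B : Type*} [Ring B] [Algebra C B]

/-- Generic convolution on `Hom(H, B)`. -/
noncomputable def CV (u w : H →ₗ[C] B) : H →ₗ[C] B :=
  LinearMap.mul' C B ∘ₗ TensorProduct.map u w ∘ₗ Coalgebra.comul (R := C)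

/-- Generic convolution unit. -/
noncomputable def CU : H →ₗ[C] B := (Algebra.linearMap C B) ∘ₗ Coalgebra.counit (R := C)

lemma conv_eq_CV (f h : H →ₗ[C] A) : conv f h = CV f h := by
  unfold conv CV
  rw [← LinearMap.comp_assoc]
  congr 1
  ext x y
  simp

lemma convUnit_eq_CU : (convUnit : H →ₗ[C] A) = CU := rfl

lemma CU_apply (g : H) : (CU : H →ₗ[C] B) g = Coalgebra.counit (R := C) g • 1 := by
  simp [CU, Algebra.algebraMap_eq_smul_one]

lemma CV_apply_repr {u w : H →ₗ[C] B} {g : H} {n : ℕ} {g1 g2 : Fin n → H}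
    (h : SwRep (C := C) g g1 g2) : CV u w g = ∑ i, u (g1 i) * w (g2 i) := by
  have := swRep_apply h (LinearMap.mul' C B ∘ₗ TensorProduct.map u w)
  simp only [LinearMap.comp_apply, TensorProduct.map_tmul, LinearMap.mul'_apply] at this
  rw [CV, LinearMap.comp_apply, LinearMap.comp_apply, ← this]

lemma CV_CU_right (u : H →ₗ[C] B) : CV u CU = u := by
  ext g
  obtain ⟨n, g1, g2, hg⟩ := exists_swRep (C := C) g
  rw [CV_apply_repr hg]
  have h2 : u (∑ i, Coalgebra.counit (R := C) (g2 i) • g1 i)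
      = ∑ i, Coalgebra.counit (R := C) (g2 i) • u (g1 i) := by simp
  rw [swRep_counit_right hg] at h2
  rw [h2]
  refine Finset.sum_congr rfl fun i _ => ?_
  rw [CU_apply, Algebra.mul_smul_comm, mul_one]

lemma CV_CU_left (u : H →ₗ[C] B) : CV CU u = u := by
  ext g
  obtain ⟨n, g1, g2, hg⟩ := exists_swRep (C := C) g
  rw [CV_apply_repr hg]
  have h2 : u (∑ i, Coalgebra.counit (R := C) (g1 i) • g2 i)
      = ∑ i, Coalgebra.counit (R := C) (g1 i) • u (g2 i) := by simp
  rw [swRep_counit_left hg] at h2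
  rw [h2]
  refine Finset.sum_congr rfl fun i _ => ?_
  rw [CU_apply, Algebra.smul_mul_assoc, one_mul]

lemma CV_assoc (u w z : H →ₗ[C] B) : CV (CV u w) z = CV u (CV w z) := by
  ext g
  obtain ⟨n, g1, g2, hg⟩ := exists_swRep (C := C) g
  choose m₁ a₁ b₁ h₁ using fun i => exists_swRep (C := C) (g1 i)
  choose m₂ a₂ b₂ h₂ using fun i => exists_swRep (C := C) (g2 i)
  have key := swRep_coassoc (LinearMap.mul' C B ∘ₗ
    TensorProduct.map u (LinearMap.mul' C B ∘ₗ TensorProduct.map w z)) hg h₁ h₂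
  simp only [LinearMap.comp_apply, TensorProduct.map_tmul, LinearMap.mul'_apply] at key
  rw [CV_apply_repr hg, CV_apply_repr hg]
  calc ∑ i, CV u w (g1 i) * z (g2 i)
      = ∑ i, ∑ j, u (a₁ i j) * (w (b₁ i j) * z (g2 i)) := by
        refine Finset.sum_congr rfl fun i _ => ?_
        rw [CV_apply_repr (h₁ i), Finset.sum_mul]
        simp [mul_assoc]
    _ = ∑ i, ∑ j, u (g1 i) * (w (a₂ i j) * z (b₂ i j)) := key
    _ = ∑ i, u (g1 i) * CV w z (g2 i) := by
        refine Finset.sum_congr rfl fun i _ => ?_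
        rw [CV_apply_repr (h₂ i), Finset.mul_sum]

lemma CV_unique {u f w : H →ₗ[C] B} (h1 : CV u f = CU) (h2 : CV f w = CU) : u = w := by
  have := CV_assoc u f w
  rw [h1, h2, CV_CU_left, CV_CU_right] at this
  exact this.symm

lemma CV_sum_right {ι : Type*} (s : Finset ι) (u : H →ₗ[C] B) (w : ι → (H →ₗ[C] B)) :
    CV u (∑ j ∈ s, w j) = ∑ j ∈ s, CV u (w j) := by
  ext g
  obtain ⟨n, g1, g2, hg⟩ := exists_swRep (C := C) g
  rw [CV_apply_repr hg]
  simp only [LinearMap.sum_apply, CV_apply_repr hg, Finset.mul_sum]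
  rw [Finset.sum_comm]

end Conv

section HopfFacts
open HopfAlgebra

lemma counit_antipode' (g : H) :
    Coalgebra.counit (R := C) (antipode (R := C) g) = Coalgebra.counit (R := C) g := by
  obtain ⟨n, g1, g2, hg⟩ := exists_swRep (C := C) g
  have h1 := congrArg (Coalgebra.counit (R := C)) (swRep_antipode_mul hg)
  simp only [map_sum, Bialgebra.counit_mul, map_smul, Bialgebra.counit_one, smul_eq_mul,
    mul_one] at h1
  calc Coalgebra.counit (R := C) (antipode (R := C) g)
      = Coalgebra.counit (R := C) (antipode (R := C)
          (∑ i, Coalgebra.counit (R := C) (g2 i) • g1 i)) := by rw [swRep_counit_right hg]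
    _ = ∑ i, Coalgebra.counit (R := C) (antipode (R := C) (g1 i))
          * Coalgebra.counit (R := C) (g2 i) := by
        simp [map_sum, map_smul, smul_eq_mul, mul_comm]
    _ = Coalgebra.counit (R := C) g := h1

lemma swRep_one : SwRep (C := C) (1 : H) (fun _ : Fin 1 => 1) (fun _ => 1) := by
  unfold SwRep
  simp [Algebra.TensorProduct.one_def]

lemma antipode_one' : antipode (R := C) (1 : H) = 1 := by
  have := swRep_antipode_mul (swRep_one (C := C) (H := H))
  simpa using this

lemma star_T_sum (hH : IsHopfStar C H) {u : H} {n : ℕ} {u1 u2 : Fin n → H}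
    (hu : SwRep (C := C) u u1 u2) :
    ∑ i, u2 i * star (antipode (R := C) (star (u1 i)))
      = Coalgebra.counit (R := C) u • (1 : H) := by
  have h1 := swRep_antipode_mul (hH.2 u n u1 u2 hu)
  rw [hH.1] at h1
  have h2 := congrArg star h1
  simp only [star_sum, star_mul, star_smul, star_star, star_one] at h2
  exact h2

/-- The `flip ∘ (S ⊗ S) ∘ Δ` map. -/
noncomputable def Gmap : H →ₗ[C] H ⊗[C] H :=
  (TensorProduct.comm C H H).toLinearMap ∘ₗ
    TensorProduct.map (antipode (R := C)) (antipode (R := C)) ∘ₗ Coalgebra.comul (R := C)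

lemma Gmap_apply_repr {g : H} {n : ℕ} {g1 g2 : Fin n → H} (hg : SwRep (C := C) g g1 g2) :
    Gmap (C := C) (H := H) g
      = ∑ i, antipode (R := C) (g2 i) ⊗ₜ[C] antipode (R := C) (g1 i) := by
  unfold Gmap
  rw [LinearMap.comp_apply, LinearMap.comp_apply, hg, map_sum, map_sum]
  simp

lemma CV_comul_comulS :
    CV (B := H ⊗[C] H) (Coalgebra.comul (R := C))
      ((Coalgebra.comul (R := C)) ∘ₗ antipode (R := C)) = CU := by
  ext g
  obtain ⟨n, g1, g2, hg⟩ := exists_swRep (C := C) g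
  rw [CV_apply_repr hg, CU_apply]
  have h1 : ∑ i, Coalgebra.comul (R := C) (g1 i)
        * (Coalgebra.comul (R := C) ∘ₗ antipode (R := C)) (g2 i)
      = Coalgebra.comul (R := C) (∑ i, g1 i * antipode (R := C) (g2 i)) := by
    rw [map_sum]
    exact Finset.sum_congr rfl fun i _ => (Bialgebra.comul_mul _ _).symm
  rw [h1, swRep_mul_antipode hg, map_smul, Bialgebra.comul_one]

lemma CV_Gmap_comul :
    CV (B := H ⊗[C] H) (Gmap (C := C) (H := H)) (Coalgebra.comul (R := C)) = CU := by
  ext g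
  obtain ⟨n, g1, g2, hg⟩ := exists_swRep (C := C) g
  choose m₁ p q h₁ using fun i => exists_swRep (C := C) (g1 i)
  choose m₂ c d h₂ using fun i => exists_swRep (C := C) (g2 i)
  choose m₃ e f h₃ using fun i l => exists_swRep (C := C) (d i l)
  choose m₄ cc cd h₄ using fun i l => exists_swRep (C := C) (c i l)
  set ψ : H ⊗[C] H →ₗ[C] H ⊗[C] H :=
    (TensorProduct.comm C H H).toLinearMap ∘ₗ
      TensorProduct.map (antipode (R := C)) (antipode (R := C)) with hψ
  set Φ₁ : H ⊗[C] (H ⊗[C] H) →ₗ[C] H ⊗[C] H :=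
    LinearMap.mul' C (H ⊗[C] H) ∘ₗ TensorProduct.map ψ (Coalgebra.comul (R := C)) ∘ₗ
      (TensorProduct.assoc C H H H).symm.toLinearMap with hΦ₁
  have step1 := swRep_coassoc Φ₁ hg h₁ h₂
  have lhs_eq : CV (B := H ⊗[C] H) (Gmap (C := C) (H := H)) (Coalgebra.comul (R := C)) g
      = ∑ i, ∑ j, Φ₁ (p i j ⊗ₜ[C] (q i j ⊗ₜ[C] g2 i)) := by
    rw [CV_apply_repr hg]
    refine Finset.sum_congr rfl fun i _ => ?_
    rw [Gmap_apply_repr (h₁ i), Finset.sum_mul]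
    refine Finset.sum_congr rfl fun j _ => ?_
    simp [hΦ₁, hψ]
  rw [lhs_eq, step1]
  -- now : ∑ i, ∑ l, Φ₁ (g1 i ⊗ (c i l ⊗ d i l))
  have step2 : ∀ i, ∑ l, Φ₁ (g1 i ⊗ₜ[C] (c i l ⊗ₜ[C] d i l))
      = (1 : H) ⊗ₜ[C] (antipode (R := C) (g1 i) * g2 i) := by
    intro i
    set Φ₂ : H ⊗[C] (H ⊗[C] H) →ₗ[C] H ⊗[C] H :=
      TensorProduct.map
        (LinearMap.mul' C H ∘ₗ TensorProduct.map (antipode (R := C)) LinearMap.id)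
        (LinearMap.mulLeft C (antipode (R := C) (g1 i))) ∘ₗ
        (TensorProduct.assoc C H H H).symm.toLinearMap with hΦ₂
    have e1 : ∑ l, Φ₁ (g1 i ⊗ₜ[C] (c i l ⊗ₜ[C] d i l))
        = ∑ l, ∑ k, Φ₂ (c i l ⊗ₜ[C] (e i l k ⊗ₜ[C] f i l k)) := by
      refine Finset.sum_congr rfl fun l _ => ?_
      have : Φ₁ (g1 i ⊗ₜ[C] (c i l ⊗ₜ[C] d i l))
          = (antipode (R := C) (c i l) ⊗ₜ[C] antipode (R := C) (g1 i))
              * Coalgebra.comul (R := C) (d i l) := by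
        simp [hΦ₁, hψ]
      rw [this, h₃ i l, Finset.mul_sum]
      refine Finset.sum_congr rfl fun k _ => ?_
      simp [hΦ₂, Algebra.TensorProduct.tmul_mul_tmul]
    have e2 := swRep_coassoc Φ₂ (h₂ i) (h₄ i) (h₃ i)
    rw [e1, ← e2]
    have e3 : ∀ l, ∑ k, Φ₂ (cc i l k ⊗ₜ[C] (cd i l k ⊗ₜ[C] d i l))
        = Coalgebra.counit (R := C) (c i l)
            • ((1 : H) ⊗ₜ[C] (antipode (R := C) (g1 i) * d i l)) := by
      intro l
      have e4 : ∀ k, Φ₂ (cc i l k ⊗ₜ[C] (cd i l k ⊗ₜ[C] d i l))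
          = (antipode (R := C) (cc i l k) * cd i l k) ⊗ₜ[C]
              (antipode (R := C) (g1 i) * d i l) := by
        intro k; simp [hΦ₂]
      simp only [e4]
      rw [← TensorProduct.sum_tmul, swRep_antipode_mul (h₄ i l),
        TensorProduct.smul_tmul']
    simp only [e3]
    have e5 : ∀ l, Coalgebra.counit (R := C) (c i l)
          • ((1 : H) ⊗ₜ[C] (antipode (R := C) (g1 i) * d i l))
        = (1 : H) ⊗ₜ[C] (antipode (R := C) (g1 i)
            * (Coalgebra.counit (R := C) (c i l) • d i l)) := by
      intro l
      rw [mul_smul_comm, TensorProduct.tmul_smul]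
    simp only [e5]
    rw [← TensorProduct.tmul_sum, ← Finset.mul_sum, swRep_counit_left (h₂ i)]
  simp only [step2]
  rw [← TensorProduct.tmul_sum, swRep_antipode_mul hg, TensorProduct.tmul_smul, CU_apply]
  rw [Algebra.TensorProduct.one_def]

end HopfFacts

section HopfFacts2
open HopfAlgebra

lemma comul_antipode_eq :
    (Coalgebra.comul (R := C)) ∘ₗ (antipode (R := C) (A := H)) = Gmap (C := C) (H := H) :=
  (CV_unique CV_Gmap_comul CV_comul_comulS).symm

lemma swRep_antipode' {g : H} {n : ℕ} {g1 g2 : Fin n → H} (hg : SwRep (C := C) g g1 g2) :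
    SwRep (C := C) (antipode (R := C) g)
      (fun i => antipode (R := C) (g2 i)) (fun i => antipode (R := C) (g1 i)) := by
  unfold SwRep
  have := LinearMap.congr_fun (comul_antipode_eq (C := C) (H := H)) g
  rw [LinearMap.comp_apply] at this
  rw [this, Gmap_apply_repr hg]

/-- The map `g ↦ (S(g*))*`. -/
noncomputable def Tlin : H →ₗ[C] H where
  toFun g := star (antipode (R := C) (star g))
  map_add' x y := by simp [star_add, map_add]
  map_smul' c x := by simp [star_smul, map_smul, star_star]

lemma CV_id_antipode : CV (B := H) LinearMap.id (antipode (R := C) (A := H)) = CU := by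
  ext g
  obtain ⟨n, g1, g2, hg⟩ := exists_swRep (C := C) g
  rw [CV_apply_repr hg, CU_apply]
  simpa using swRep_mul_antipode hg

lemma CV_antipode_TlinS (hH : IsHopfStar C H) :
    CV (B := H) (antipode (R := C) (A := H))
      ((Tlin (C := C) (H := H)) ∘ₗ antipode (R := C)) = CU := by
  ext g
  obtain ⟨n, g1, g2, hg⟩ := exists_swRep (C := C) g
  rw [CV_apply_repr hg, CU_apply]
  have h1 := star_T_sum hH (swRep_antipode' hg)
  rw [counit_antipode'] at h1
  simpa [Tlin] using h1

lemma star_antipode_star_antipode (hH : IsHopfStar C H) (g : H) :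
    star (antipode (R := C) (star (antipode (R := C) g))) = g := by
  have h := CV_unique (CV_id_antipode (C := C) (H := H)) (CV_antipode_TlinS hH)
  have := LinearMap.congr_fun h g
  simpa [Tlin] using this.symm

lemma antipode_mul' (a b : H) :
    antipode (R := C) (a * b) = antipode (R := C) b * antipode (R := C) a := by
  obtain ⟨na, aL, aR, ha⟩ := exists_swRep (C := C) a
  obtain ⟨nb, bL, bR, hb⟩ := exists_swRep (C := C) b
  choose am aM aE haR using fun i => exists_swRep (C := C) (aR i)
  choose bm bM bE hbR using fun k => exists_swRep (C := C) (bR k)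
  choose al aLL aLR haL using fun i => exists_swRep (C := C) (aL i)
  choose bl bLL bLR hbL using fun k => exists_swRep (C := C) (bL k)
  set Φa : H ⊗[C] (H ⊗[C] H) →ₗ[C] H := ∑ k, ∑ l,
    LinearMap.mul' C H ∘ₗ TensorProduct.map
      (antipode (R := C) ∘ₗ LinearMap.mulRight C (bL k))
      (LinearMap.mul' C H ∘ₗ TensorProduct.map
        (LinearMap.mulRight C (bM k l))
        (LinearMap.mulLeft C (antipode (R := C) (bE k l)) ∘ₗ antipode (R := C)))
    with hΦa
  have Φa_apply : ∀ (x y z : H), Φa (x ⊗ₜ[C] (y ⊗ₜ[C] z))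
      = ∑ k, ∑ l, antipode (R := C) (x * bL k)
          * ((y * bM k l) * (antipode (R := C) (bE k l) * antipode (R := C) z)) := by
    intro x y z
    rw [hΦa]
    simp [LinearMap.sum_apply]
  set X : H := ∑ i, ∑ j, Φa (aL i ⊗ₜ[C] (aM i j ⊗ₜ[C] aE i j)) with hX
  -- Evaluation 1 : X = S (a * b)
  have eval1 : X = antipode (R := C) (a * b) := by
    rw [hX]
    have inner : ∀ i j, Φa (aL i ⊗ₜ[C] (aM i j ⊗ₜ[C] aE i j))
        = ∑ k, (Coalgebra.counit (R := C) (bR k)) •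
            (antipode (R := C) (aL i * bL k) * (aM i j * antipode (R := C) (aE i j))) := by
      intro i j
      rw [Φa_apply]
      refine Finset.sum_congr rfl fun k _ => ?_
      have rearr : ∀ l, antipode (R := C) (aL i * bL k)
            * ((aM i j * bM k l) * (antipode (R := C) (bE k l) * antipode (R := C) (aE i j)))
          = antipode (R := C) (aL i * bL k)
            * (aM i j * ((bM k l * antipode (R := C) (bE k l)) * antipode (R := C) (aE i j))) := by
        intro l; simp only [mul_assoc]
      simp only [rearr]
      rw [← Finset.mul_sum, ← Finset.mul_sum, ← Finset.sum_mul,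
        swRep_mul_antipode (hbR k), smul_mul_assoc, one_mul, mul_smul_comm, mul_smul_comm]
    simp only [inner]
    have inner2 : ∀ i, ∑ j, ∑ k, (Coalgebra.counit (R := C) (bR k)) •
            (antipode (R := C) (aL i * bL k) * (aM i j * antipode (R := C) (aE i j)))
        = ∑ k, (Coalgebra.counit (R := C) (aR i)) • ((Coalgebra.counit (R := C) (bR k)) •
            antipode (R := C) (aL i * bL k)) := by
      intro i
      rw [Finset.sum_comm]
      refine Finset.sum_congr rfl fun k _ => ?_
      rw [← Finset.smul_sum, ← Finset.mul_sum, swRep_mul_antipode (haR i),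
        mul_smul_comm, mul_one, smul_comm]
    simp only [inner2]
    have hab : a * b = ∑ i, ∑ k, (Coalgebra.counit (R := C) (aR i)) •
        ((Coalgebra.counit (R := C) (bR k)) • (aL i * bL k)) := by
      calc a * b = (∑ i, Coalgebra.counit (R := C) (aR i) • aL i)
            * (∑ k, Coalgebra.counit (R := C) (bR k) • bL k) := by
            rw [swRep_counit_right ha, swRep_counit_right hb]
        _ = _ := by
            rw [Finset.sum_mul]
            refine Finset.sum_congr rfl fun i _ => ?_
            rw [Finset.mul_sum]
            refine Finset.sum_congr rfl fun k _ => ?_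
            rw [smul_mul_assoc, mul_smul_comm]
    rw [hab]
    simp [map_sum, map_smul]
  -- Evaluation 2 : X = S b * S a
  have eval2 : X = antipode (R := C) b * antipode (R := C) a := by
    have stepA := swRep_coassoc Φa ha haL haR
    rw [hX, ← stepA]
    set Ψ : H ⊗[C] (H ⊗[C] H) →ₗ[C] H := ∑ i, ∑ j,
      LinearMap.mul' C H ∘ₗ TensorProduct.map
        (antipode (R := C) ∘ₗ LinearMap.mulLeft C (aLL i j))
        (LinearMap.mul' C H ∘ₗ TensorProduct.map
          (LinearMap.mulLeft C (aLR i j))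
          (LinearMap.mulRight C (antipode (R := C) (aR i)) ∘ₗ antipode (R := C)))
      with hΨ
    have Ψ_apply : ∀ (x y z : H), Ψ (x ⊗ₜ[C] (y ⊗ₜ[C] z))
        = ∑ i, ∑ j, antipode (R := C) (aLL i j * x)
            * ((aLR i j * y) * (antipode (R := C) z * antipode (R := C) (aR i))) := by
      intro x y z
      rw [hΨ]
      simp [LinearMap.sum_apply]
    have comm4 : ∑ i, ∑ j, Φa (aLL i j ⊗ₜ[C] (aLR i j ⊗ₜ[C] aR i))
        = ∑ k, ∑ l, Ψ (bL k ⊗ₜ[C] (bM k l ⊗ₜ[C] bE k l)) := by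
      simp only [Φa_apply, Ψ_apply]
      exact sum4_comm _
    rw [comm4]
    have stepB := swRep_coassoc Ψ hb hbL hbR
    rw [← stepB]
    have collapse : ∀ k l, Ψ (bLL k l ⊗ₜ[C] (bLR k l ⊗ₜ[C] bR k))
        = ∑ i, ∑ j, (antipode (R := C) (aLL i j * bLL k l) * (aLR i j * bLR k l))
            * (antipode (R := C) (bR k) * antipode (R := C) (aR i)) := by
      intro k l
      rw [Ψ_apply]
      simp only [mul_assoc]
    simp only [collapse]
    have collapse2 : ∀ k, ∑ l, ∑ i, ∑ j,
          (antipode (R := C) (aLL i j * bLL k l) * (aLR i j * bLR k l))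
            * (antipode (R := C) (bR k) * antipode (R := C) (aR i))
        = ∑ i, (Coalgebra.counit (R := C) (aL i) * Coalgebra.counit (R := C) (bL k)) •
            (antipode (R := C) (bR k) * antipode (R := C) (aR i)) := by
      intro k
      rw [Finset.sum_comm]
      refine Finset.sum_congr rfl fun i _ => ?_
      rw [Finset.sum_comm]
      have swap2 : ∀ j, ∑ l, (antipode (R := C) (aLL i j * bLL k l) * (aLR i j * bLR k l))
            * (antipode (R := C) (bR k) * antipode (R := C) (aR i))
          = (∑ l, antipode (R := C) (aLL i j * bLL k l) * (aLR i j * bLR k l))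
            * (antipode (R := C) (bR k) * antipode (R := C) (aR i)) := by
        intro j; rw [Finset.sum_mul]
      simp only [swap2]
      rw [← Finset.sum_mul, swRep_mul_antipode_mul (haL i) (hbL k), Bialgebra.counit_mul,
        smul_mul_assoc, one_mul]
    simp only [collapse2]
    calc ∑ k, ∑ i, (Coalgebra.counit (R := C) (aL i) * Coalgebra.counit (R := C) (bL k)) •
            (antipode (R := C) (bR k) * antipode (R := C) (aR i))
        = (∑ k, Coalgebra.counit (R := C) (bL k) • antipode (R := C) (bR k))
            * (∑ i, Coalgebra.counit (R := C) (aL i) • antipode (R := C) (aR i)) := by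
          rw [Finset.sum_mul]
          refine Finset.sum_congr rfl fun k _ => ?_
          rw [Finset.mul_sum]
          refine Finset.sum_congr rfl fun i _ => ?_
          rw [smul_mul_assoc, mul_smul_comm, smul_smul, mul_comm]
      _ = antipode (R := C) b * antipode (R := C) a := by
          simp only [← map_smul]
          rw [← map_sum, ← map_sum, swRep_counit_left ha, swRep_counit_left hb]
  rw [← eval1, eval2]

end HopfFacts2

section Dagger
open HopfAlgebra

lemma convUnit_apply (g : H) :
    (convUnit : H →ₗ[C] A) g = Coalgebra.counit (R := C) g • 1 := by
  rw [convUnit_eq_CU]; exact CU_apply g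

variable (α : StarAction C H A)

/-- `β b : g ↦ g ▷ b`. -/
noncomputable def beta (b : A) : H →ₗ[C] A := α.act.flip b

lemma beta_apply (b : A) (g : H) : beta α b g = α.act g b := rfl

/-- `f† : g ↦ (f(S(g)*))*`. -/
noncomputable def dagger (f : H →ₗ[C] A) : H →ₗ[C] A where
  toFun g := star (f (star (antipode (R := C) g)))
  map_add' x y := by simp [map_add, star_add]
  map_smul' c x := by simp [map_smul, star_smul, star_star]

lemma dagger_apply (f : H →ₗ[C] A) (g : H) :
    dagger f g = star (f (star (antipode (R := C) g))) := rfl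

lemma dagger_conv (hH : IsHopfStar C H) (u w : H →ₗ[C] A) :
    dagger (conv u w) = conv (dagger w) (dagger u) := by
  ext g
  obtain ⟨n, g1, g2, hg⟩ := exists_swRep (C := C) g
  have hrep : SwRep (C := C) (star (antipode (R := C) g))
      (fun i => star (antipode (R := C) (g2 i)))
      (fun i => star (antipode (R := C) (g1 i))) := hH.2 _ n _ _ (swRep_antipode' hg)
  have h1 : conv u w (star (antipode (R := C) g))
      = ∑ i, u (star (antipode (R := C) (g2 i))) * w (star (antipode (R := C) (g1 i))) := by
    rw [conv_eq_CV, CV_apply_repr hrep]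
  have h2 : conv (dagger w) (dagger u) g = ∑ i, dagger w (g1 i) * dagger u (g2 i) := by
    rw [conv_eq_CV, CV_apply_repr hg]
  rw [dagger_apply, h1, h2]
  simp only [star_sum, star_mul, dagger_apply]

lemma dagger_convUnit (hH : IsHopfStar C H) : dagger (convUnit : H →ₗ[C] A) = convUnit := by
  ext g
  rw [dagger_apply, convUnit_apply, convUnit_apply, hH.1, counit_antipode']
  rw [star_smul, star_star, star_one]

lemma dagger_dagger (hH : IsHopfStar C H) (f : H →ₗ[C] A) : dagger (dagger f) = f := by
  ext g
  simp only [dagger_apply, star_star]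
  rw [star_antipode_star_antipode hH]

lemma dagger_beta (hH : IsHopfStar C H) (b : A) : dagger (beta α b) = beta α (star b) := by
  ext g
  rw [dagger_apply, beta_apply, beta_apply, α.act_star]
  rw [star_antipode_star_antipode hH]

lemma mem_GL_iff (f : H →ₗ[C] A) :
    f ∈ GLset α ↔ f 1 = 1 ∧ (∀ g x : H, f (g * x) = conv f (beta α (f x)) g) ∧
      (∀ b : A, conv (beta α b) f = conv f (beta α b)) := by
  constructor
  · rintro ⟨h1, h2, h3⟩
    refine ⟨h1, fun g x => ?_, fun b => ?_⟩
    · obtain ⟨n, g1, g2, hg⟩ := exists_swRep (C := C) g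
      rw [h2 g x n g1 g2 hg, conv_eq_CV, CV_apply_repr hg]
      rfl
    · ext g
      obtain ⟨n, g1, g2, hg⟩ := exists_swRep (C := C) g
      rw [conv_eq_CV, conv_eq_CV, CV_apply_repr hg, CV_apply_repr hg]
      exact h3 g b n g1 g2 hg
  · rintro ⟨h1, h2, h3⟩
    refine ⟨h1, fun g x n g1 g2 hg => ?_, fun g b n g1 g2 hg => ?_⟩
    · rw [h2 g x, conv_eq_CV, CV_apply_repr hg]; rfl
    · have := LinearMap.congr_fun (h3 b) g
      rw [conv_eq_CV, conv_eq_CV, CV_apply_repr hg, CV_apply_repr hg] at this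
      exact this

lemma mem_U_iff (f : H →ₗ[C] A) :
    f ∈ Uset α ↔ f ∈ GLset α ∧ conv f (dagger f) = convUnit := by
  constructor
  · rintro ⟨h1, h2⟩
    refine ⟨h1, ?_⟩
    ext g
    obtain ⟨n, g1, g2, hg⟩ := exists_swRep (C := C) g
    rw [conv_eq_CV, CV_apply_repr hg, convUnit_apply]
    simpa [dagger_apply] using h2 g n g1 g2 hg
  · rintro ⟨h1, h2⟩
    refine ⟨h1, fun g n g1 g2 hg => ?_⟩
    have := LinearMap.congr_fun h2 g
    rw [conv_eq_CV, CV_apply_repr hg, convUnit_apply] at this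
    simpa [dagger_apply] using this

/-- The canonical right convolution inverse `g ↦ g₍₁₎ ▷ f(S g₍₂₎)`. -/
noncomputable def vinv (f : H →ₗ[C] A) : H →ₗ[C] A :=
  (TensorProduct.lift α.act ∘ₗ
      LinearMap.lTensor H (f ∘ₗ antipode (R := C))) ∘ₗ Coalgebra.comul (R := C)

lemma vinv_apply_repr {f : H →ₗ[C] A} {g : H} {n : ℕ} {g1 g2 : Fin n → H}
    (hg : SwRep (C := C) g g1 g2) :
    vinv α f g = ∑ i, α.act (g1 i) (f (antipode (R := C) (g2 i))) := by
  unfold vinv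
  rw [LinearMap.comp_apply, hg, map_sum]
  simp

end Dagger

section GLfacts
open HopfAlgebra
variable (α : StarAction C H A)

lemma act_sum_smul {g : H} {n : ℕ} {g1 g2 : Fin n → H} (hg : SwRep (C := C) g g1 g2)
    (b : A) : ∑ i, Coalgebra.counit (R := C) (g2 i) • α.act (g1 i) b = α.act g b := by
  have h2 : α.act (∑ i, Coalgebra.counit (R := C) (g2 i) • g1 i) b
      = ∑ i, Coalgebra.counit (R := C) (g2 i) • α.act (g1 i) b := by
    simp [map_sum, map_smul, LinearMap.sum_apply, LinearMap.smul_apply]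
  rw [swRep_counit_right hg] at h2
  exact h2.symm

lemma act_sum_smul' {g : H} {n : ℕ} {g1 g2 : Fin n → H} (hg : SwRep (C := C) g g1 g2)
    (b : A) : ∑ i, Coalgebra.counit (R := C) (g1 i) • α.act (g2 i) b = α.act g b := by
  have h2 : α.act (∑ i, Coalgebra.counit (R := C) (g1 i) • g2 i) b
      = ∑ i, Coalgebra.counit (R := C) (g1 i) • α.act (g2 i) b := by
    simp [map_sum, map_smul, LinearMap.sum_apply, LinearMap.smul_apply]
  rw [swRep_counit_left hg] at h2
  exact h2.symm

lemma convUnit_mem_GL : (convUnit : H →ₗ[C] A) ∈ GLset α := by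
  rw [mem_GL_iff]
  refine ⟨by rw [convUnit_apply]; simp, fun g x => ?_, fun b => ?_⟩
  · obtain ⟨n, g1, g2, hg⟩ := exists_swRep (C := C) g
    rw [conv_eq_CV, CV_apply_repr hg]
    have hcount : ∑ i, Coalgebra.counit (R := C) (g1 i) * Coalgebra.counit (R := C) (g2 i)
        = Coalgebra.counit (R := C) g := by
      have := congrArg (Coalgebra.counit (R := C)) (swRep_counit_left hg)
      simpa [map_sum, map_smul, smul_eq_mul] using this
    calc convUnit (g * x)
        = ((Coalgebra.counit (R := C) g * Coalgebra.counit (R := C) x)) • (1 : A) := by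
          rw [convUnit_apply, Bialgebra.counit_mul]
      _ = ∑ i, convUnit (g1 i) * beta α (convUnit x) (g2 i) := by
          rw [← hcount, Finset.sum_mul, Finset.sum_smul]
          refine Finset.sum_congr rfl fun i _ => ?_
          rw [convUnit_apply, beta_apply, convUnit_apply, map_smul, α.act_unit,
            smul_mul_assoc, one_mul, smul_smul, smul_smul]
          congr 1
          ring
  · rw [conv_eq_CV, conv_eq_CV]
    ext g
    obtain ⟨n, g1, g2, hg⟩ := exists_swRep (C := C) g
    rw [CV_apply_repr (u := beta α b) (w := (convUnit : H →ₗ[C] A)) hg,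
      CV_apply_repr (u := (convUnit : H →ₗ[C] A)) (w := beta α b) hg]
    have t1 : ∀ i, beta α b (g1 i) * (convUnit : H →ₗ[C] A) (g2 i)
        = Coalgebra.counit (R := C) (g2 i) • α.act (g1 i) b := by
      intro i; rw [beta_apply, convUnit_apply, mul_smul_comm, mul_one]
    have t2 : ∀ i, (convUnit : H →ₗ[C] A) (g1 i) * beta α b (g2 i)
        = Coalgebra.counit (R := C) (g1 i) • α.act (g2 i) b := by
      intro i; rw [beta_apply, convUnit_apply, smul_mul_assoc, one_mul]
    simp only [t1, t2]
    rw [act_sum_smul α hg, act_sum_smul' α hg]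

lemma conv_mem_GL {f h : H →ₗ[C] A} (hf : f ∈ GLset α) (hh : h ∈ GLset α) :
    conv f h ∈ GLset α := by
  rw [mem_GL_iff] at hf hh ⊢
  obtain ⟨f1, f2, f3⟩ := hf
  obtain ⟨h1, h2, h3⟩ := hh
  have h3' : ∀ b : A, CV (beta α b) h = CV h (beta α b) := by
    intro b; rw [← conv_eq_CV, ← conv_eq_CV]; exact h3 b
  have f3' : ∀ b : A, CV (beta α b) f = CV f (beta α b) := by
    intro b; rw [← conv_eq_CV, ← conv_eq_CV]; exact f3 b
  refine ⟨?_, fun g x => ?_, fun b => ?_⟩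
  · rw [conv_eq_CV, CV_apply_repr (swRep_one (C := C) (H := H))]
    simp [f1, h1]
  · -- the cocycle identity for the product
    obtain ⟨n, g1, g2, hg⟩ := exists_swRep (C := C) g
    obtain ⟨m, x1, x2, hx⟩ := exists_swRep (C := C) x
    have expand : conv f h (g * x) = ∑ i, ∑ j, f (g1 i * x1 j) * h (g2 i * x2 j) := by
      rw [conv_eq_CV]
      unfold CV
      rw [LinearMap.comp_apply, LinearMap.comp_apply, comul_mul_repr hg hx]
      simp [map_sum]
    rw [expand]
    have e0 : ∀ i j, f (g1 i * x1 j) * h (g2 i * x2 j)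
        = CV f (beta α (f (x1 j))) (g1 i) * CV h (beta α (h (x2 j))) (g2 i) := by
      intro i j
      rw [f2 (g1 i) (x1 j), h2 (g2 i) (x2 j), conv_eq_CV, conv_eq_CV]
    simp only [e0]
    rw [Finset.sum_comm]
    have e1 : ∀ j, ∑ i, CV f (beta α (f (x1 j))) (g1 i) * CV h (beta α (h (x2 j))) (g2 i)
        = CV (CV f (beta α (f (x1 j)))) (CV h (beta α (h (x2 j)))) g :=
      fun j => (CV_apply_repr hg).symm
    simp only [e1]
    have e2 : ∀ (a b : A), CV (CV f (beta α a)) (CV h (beta α b))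
        = CV (CV f h) (CV (beta α a) (beta α b)) := by
      intro a b
      rw [CV_assoc f (beta α a) (CV h (beta α b)),
        ← CV_assoc (beta α a) h (beta α b), h3' a,
        CV_assoc h (beta α a) (beta α b), ← CV_assoc f h]
    simp only [e2]
    have e3 : ∑ j, CV (beta α (f (x1 j))) (beta α (h (x2 j))) = beta α (conv f h x) := by
      ext g'
      obtain ⟨p, y1, y2, hy⟩ := exists_swRep (C := C) g'
      simp only [LinearMap.sum_apply, CV_apply_repr hy, beta_apply]
      have hfx : conv f h x = ∑ j, f (x1 j) * h (x2 j) := by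
        rw [conv_eq_CV, CV_apply_repr hx]
      rw [hfx, map_sum]
      refine Finset.sum_congr rfl fun j _ => ?_
      exact (α.act_ab g' (f (x1 j)) (h (x2 j)) p y1 y2 hy).symm
    rw [← LinearMap.sum_apply, ← CV_sum_right, e3, conv_eq_CV]
    rw [conv_eq_CV (CV f h)]
  · rw [conv_eq_CV (beta α b) (conv f h), conv_eq_CV (conv f h) (beta α b), conv_eq_CV f h]
    rw [← CV_assoc, f3' b, CV_assoc, h3' b, ← CV_assoc]

lemma conv_vinv_eq {f : H →ₗ[C] A} (hf : f ∈ GLset α) : conv f (vinv α f) = convUnit := by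
  rw [mem_GL_iff] at hf
  obtain ⟨f1, f2, f3⟩ := hf
  ext g
  obtain ⟨n, g1, g2, hg⟩ := exists_swRep (C := C) g
  choose m a bb hr using fun i => exists_swRep (C := C) (g2 i)
  choose p aL bL hL using fun i => exists_swRep (C := C) (g1 i)
  rw [conv_eq_CV, CV_apply_repr hg]
  have e0 : ∀ i, f (g1 i) * vinv α f (g2 i)
      = ∑ j, f (g1 i) * α.act (a i j) (f (antipode (R := C) (bb i j))) := by
    intro i; rw [vinv_apply_repr α (hr i), Finset.mul_sum]
  simp only [e0]
  set Φ : H ⊗[C] (H ⊗[C] H) →ₗ[C] A := LinearMap.mul' C A ∘ₗ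
    TensorProduct.map f (TensorProduct.lift α.act ∘ₗ
      LinearMap.lTensor H (f ∘ₗ antipode (R := C))) with hΦ
  have eΦr : ∀ i j, Φ (g1 i ⊗ₜ[C] (a i j ⊗ₜ[C] bb i j))
      = f (g1 i) * α.act (a i j) (f (antipode (R := C) (bb i j))) := by
    intro i j; simp [hΦ]
  have eΦl : ∀ i j, Φ (aL i j ⊗ₜ[C] (bL i j ⊗ₜ[C] g2 i))
      = f (aL i j) * α.act (bL i j) (f (antipode (R := C) (g2 i))) := by
    intro i j; simp [hΦ]
  have hsh := swRep_coassoc Φ hg hL hr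
  calc ∑ i, ∑ j, f (g1 i) * α.act (a i j) (f (antipode (R := C) (bb i j)))
      = ∑ i, ∑ j, Φ (g1 i ⊗ₜ[C] (a i j ⊗ₜ[C] bb i j)) := by simp only [eΦr]
    _ = ∑ i, ∑ j, Φ (aL i j ⊗ₜ[C] (bL i j ⊗ₜ[C] g2 i)) := hsh.symm
    _ = ∑ i, f (g1 i * antipode (R := C) (g2 i)) := by
        refine Finset.sum_congr rfl fun i _ => ?_
        simp only [eΦl]
        have := f2 (g1 i) (antipode (R := C) (g2 i))
        rw [conv_eq_CV, CV_apply_repr (hL i)] at this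
        simp only [beta_apply] at this
        rw [← this]
    _ = convUnit g := by
        rw [← map_sum, swRep_mul_antipode hg, map_smul, f1, convUnit_apply]

end GLfacts

section Main
open HopfAlgebra
variable (α : StarAction C H A)

lemma dagger_mem_GL (hH : IsHopfStar C H) {f : H →ₗ[C] A} (hf : f ∈ GLset α) :
    dagger f ∈ GLset α := by
  rw [mem_GL_iff] at hf ⊢
  obtain ⟨f1, f2, f3⟩ := hf
  have hG3 : ∀ b : A, conv (beta α b) (dagger f) = conv (dagger f) (beta α b) := by
    intro b
    have h0 := congrArg dagger (f3 (star b))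
    rw [dagger_conv hH, dagger_conv hH, dagger_beta α hH, star_star] at h0
    exact h0.symm
  refine ⟨?_, fun g x => ?_, hG3⟩
  · rw [dagger_apply, antipode_one', star_one, f1, star_one]
  · obtain ⟨n, g1, g2, hg⟩ := exists_swRep (C := C) g
    have hrep : SwRep (C := C) (star (antipode (R := C) g))
        (fun i => star (antipode (R := C) (g2 i)))
        (fun i => star (antipode (R := C) (g1 i))) := hH.2 _ n _ _ (swRep_antipode' hg)
    have key : dagger f (g * x) = ∑ i, α.act (g1 i) (dagger f x) * dagger f (g2 i) := by
      rw [dagger_apply, antipode_mul', star_mul]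
      have hexp := f2 (star (antipode (R := C) g)) (star (antipode (R := C) x))
      rw [conv_eq_CV, CV_apply_repr hrep] at hexp
      rw [hexp, star_sum]
      refine Finset.sum_congr rfl fun i _ => ?_
      rw [star_mul, beta_apply, α.act_star, star_antipode_star_antipode hH]
      rw [dagger_apply, dagger_apply]
    rw [key]
    have hcomm := LinearMap.congr_fun (hG3 (dagger f x)) g
    rw [conv_eq_CV, conv_eq_CV, CV_apply_repr hg] at hcomm
    simp only [beta_apply] at hcomm
    rw [conv_eq_CV]
    exact hcomm

lemma U_subgroup_aux (hH : IsHopfStar C H) :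
    (convUnit : H →ₗ[C] A) ∈ Uset α ∧
    (∀ f ∈ Uset α, ∀ h ∈ Uset α, conv f h ∈ Uset α) ∧
    (∀ f ∈ Uset α, ∃ h ∈ Uset α, conv f h = convUnit ∧ conv h f = convUnit) := by
  refine ⟨?_, ?_, ?_⟩
  · rw [mem_U_iff]
    refine ⟨convUnit_mem_GL α, ?_⟩
    rw [dagger_convUnit hH, conv_eq_CV, convUnit_eq_CU, CV_CU_left]
  · intro f hf h hh
    rw [mem_U_iff] at hf hh ⊢
    obtain ⟨hfGL, hfU⟩ := hf
    obtain ⟨hhGL, hhU⟩ := hh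
    refine ⟨conv_mem_GL α hfGL hhGL, ?_⟩
    rw [dagger_conv hH]
    simp only [conv_eq_CV] at hfU hhU ⊢
    rw [CV_assoc, ← CV_assoc h (dagger h) (dagger f), convUnit_eq_CU] at *
    rw [hhU, CV_CU_left, hfU]
  · intro f hf
    rw [mem_U_iff] at hf
    obtain ⟨hfGL, hfU⟩ := hf
    have hdGL : dagger f ∈ GLset α := dagger_mem_GL α hH hfGL
    have hright : conv (dagger f) (vinv α (dagger f)) = convUnit := conv_vinv_eq α hdGL
    have hdf : conv (dagger f) f = convUnit := by
      have huniq : f = vinv α (dagger f) := by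
        have h1 : CV f (dagger f) = CU := by rw [← conv_eq_CV, hfU, convUnit_eq_CU]
        have h2 : CV (dagger f) (vinv α (dagger f)) = CU := by
          rw [← conv_eq_CV, hright, convUnit_eq_CU]
        exact CV_unique h1 h2
      nth_rewrite 2 [huniq]
      exact hright
    refine ⟨dagger f, ?_, hfU, hdf⟩
    rw [mem_U_iff]
    exact ⟨hdGL, by rw [dagger_dagger hH]; exact hdf⟩

end Main
end HopfStarAux

/-- `U(H,A)` is a subgroup of the convolution group `GL(H,A)`: it contains the unit, is
closed under convolution and contains inverses. -/
theorem U_subgroup (hH : IsHopfStar C H) (α : StarAction C H A) :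
    convUnit ∈ Uset α ∧
    (∀ f ∈ Uset α, ∀ h ∈ Uset α, conv f h ∈ Uset α) ∧
    (∀ f ∈ Uset α, ∃ h ∈ Uset α, conv f h = convUnit ∧ conv h f = convUnit) := by
  exact HopfStarAux.U_subgroup_aux α hH
end
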